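/- arXiv:1801.06978 — 9 statements merged into one kernel-verified Lean document; each statement's English description precedes it below -/
import Mathlib

section
/- Let 1 ≤ q, p < ∞ and λ ≥ 1. If a connected metric two-measure space X = (X,d,ν,μ) satisfies a (q,p)-balance condition, then X satisfies a (λq, λp)-balance condition. -/
/-!
Since `B'` has radius at most `diam B`, the ratio `a = diam B' / diam B` is at most `2`.
Raising the `(q,p)`-balance inequality to the power `1/λ` controls `a^{1/λ} (ν B'/ν B)^{1/(λq)}`;
the remaining factor `a^{1 - 1/λ} ≤ 2` is absorbed into the constant, which becomes `2^{λp} C`.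
-/

open MeasureTheory Metric Set ENNReal

noncomputable section

/-- `ν` is doubling with constant `c`. -/
def IsDoubling {X : Type*} [MetricSpace X] [MeasurableSpace X]
    (ν : Measure X) (c : ℝ) : Prop :=
  ∀ (x : X) (r : ℝ), 0 < r → ν (Metric.ball x (2 * r)) ≤ ENNReal.ofReal c * ν (Metric.ball x r)

/-- `ν` is positive and finite on all balls. -/
def FinitePosOnBalls {X : Type*} [MetricSpace X] [MeasurableSpace X]
    (ν : Measure X) : Prop :=
  ∀ (x : X) (r : ℝ), 0 < r → 0 < ν (Metric.ball x r) ∧ ν (Metric.ball x r) < ⊤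

/-- The `(q,p)`-balance condition with constant `C`:
`(diam B'/diam B) (ν B'/ν B)^{1/q} ≤ C^{1/p} (μ B'/μ B)^{1/p}` for all balls
`B`, `B' = B(x',r')` with `x' ∈ B` and `0 < r' ≤ diam B`. -/
def Balance {X : Type*} [MetricSpace X] [MeasurableSpace X]
    (ν μ : Measure X) (q p C : ℝ) : Prop :=
  ∀ (x : X) (R : ℝ) (x' : X) (r' : ℝ), 0 < R → x' ∈ Metric.ball x R → 0 < r' →
    r' ≤ Metric.diam (Metric.ball x R) →
    (Metric.diam (Metric.ball x' r') / Metric.diam (Metric.ball x R)) *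
        ((ν (Metric.ball x' r')).toReal / (ν (Metric.ball x R)).toReal) ^ (1 / q)
      ≤ C ^ (1 / p) *
        ((μ (Metric.ball x' r')).toReal / (μ (Metric.ball x R)).toReal) ^ (1 / p)

/-- The `p`-balance condition with constant `C`:
`(diam B'/diam B)^p (ν B'/ν B) ≤ C (μ B'/μ B)` for all balls
`B`, `B' = B(x',r')` with `x' ∈ B` and `0 < r' ≤ diam B`. -/
def PBalance {X : Type*} [MetricSpace X] [MeasurableSpace X]
    (ν μ : Measure X) (p C : ℝ) : Prop :=
  ∀ (x : X) (R : ℝ) (x' : X) (r' : ℝ), 0 < R → x' ∈ Metric.ball x R → 0 < r' →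
    r' ≤ Metric.diam (Metric.ball x R) →
    (Metric.diam (Metric.ball x' r') / Metric.diam (Metric.ball x R)) ^ p *
        ((ν (Metric.ball x' r')).toReal / (ν (Metric.ball x R)).toReal)
      ≤ C * ((μ (Metric.ball x' r')).toReal / (μ (Metric.ball x R)).toReal)

namespace Real

lemma self_le_mul_rpow_of_le {a K s : ℝ} (ha : 0 ≤ a) (haK : a ≤ K) (hK : 1 ≤ K)
    (hs0 : 0 ≤ s) (hs : s ≤ 1) : a ≤ K * a ^ s := by
  rcases ha.eq_or_lt with rfl | ha
  · positivity
  calc a = a ^ (1 - s) * a ^ s := by rw [← rpow_add ha, sub_add_cancel, rpow_one]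
    _ ≤ K ^ (1 - s) * a ^ s := by gcongr
    _ ≤ K * a ^ s := by gcongr; exact rpow_le_self_of_one_le hK (by linarith)

lemma mul_rpow_le_of_mul_rpow_le {a b d K C q p lam : ℝ} (ha : 0 ≤ a) (haK : a ≤ K)
    (hK : 1 ≤ K) (hb : 0 ≤ b) (hd : 0 ≤ d) (hC : 0 < C) (hp : p ≠ 0) (hlam : 1 ≤ lam)
    (h : a * b ^ (1 / q) ≤ C ^ (1 / p) * d ^ (1 / p)) :
    a * b ^ (1 / (lam * q)) ≤ (K ^ (lam * p) * C) ^ (1 / (lam * p)) * d ^ (1 / (lam * p)) := by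
  have hlam0 : 0 < lam := one_pos.trans_le hlam
  have hsplit {x y : ℝ} (hx : 0 ≤ x) : x ^ (1 / (lam * y)) = (x ^ (1 / y)) ^ (1 / lam) := by
    rw [← rpow_mul hx, one_div_mul_one_div, mul_comm]
  have hK_const : (K ^ (lam * p)) ^ (1 / (lam * p)) = K := by
    rw [← rpow_mul (by linarith), mul_one_div_cancel (mul_ne_zero hlam0.ne' hp), rpow_one]
  calc a * b ^ (1 / (lam * q))
      ≤ K * a ^ (1 / lam) * (b ^ (1 / q)) ^ (1 / lam) := by
        rw [hsplit hb]
        gcongr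
        exact self_le_mul_rpow_of_le ha haK hK (by positivity) ((div_le_one hlam0).2 hlam)
    _ = K * (a * b ^ (1 / q)) ^ (1 / lam) := by
        rw [mul_assoc, mul_rpow ha (by positivity)]
    _ ≤ K * (C ^ (1 / p) * d ^ (1 / p)) ^ (1 / lam) := by gcongr
    _ = (K ^ (lam * p) * C) ^ (1 / (lam * p)) * d ^ (1 / (lam * p)) := by
        rw [mul_rpow (by positivity) (by positivity), ← hsplit hC.le, ← hsplit hd,
          mul_rpow (by positivity) hC.le, hK_const, mul_assoc]

end Real

lemma diam_ball_div_le_two {X : Type*} [PseudoMetricSpace X] {x : X} {r D : ℝ}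
    (hr : 0 ≤ r) (hrD : r ≤ D) : diam (ball x r) / D ≤ 2 :=
  div_le_of_le_mul₀ (hr.trans hrD) zero_le_two <|
    (diam_ball hr).trans (by linarith)

theorem Balance.mul_exponents {X : Type*} [MetricSpace X] [MeasurableSpace X]
    {ν μ : Measure X} {q p lam C : ℝ} (hbal : Balance ν μ q p C) (hC : 0 < C) (hp : p ≠ 0)
    (hlam : 1 ≤ lam) : Balance ν μ (lam * q) (lam * p) (2 ^ (lam * p) * C) :=
  fun x R x' r' hR hx' hr' hr'le =>
    Real.mul_rpow_le_of_mul_rpow_le (by positivity) (diam_ball_div_le_two hr'.le hr'le)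
      one_le_two (by positivity) (by positivity) hC hp hlam
      (hbal x R x' r' hR hx' hr' hr'le)

theorem stmt3_general {X : Type*} [MetricSpace X] [MeasurableSpace X]
    (ν μ : Measure X) (q p lam : ℝ)
    (hp : 1 ≤ p) (hlam : 1 ≤ lam)
    (hbal : ∃ C > 0, Balance ν μ q p C) :
    ∃ C > 0, Balance ν μ (lam * q) (lam * p) C := by
  obtain ⟨C, hC, hB⟩ := hbal
  exact ⟨2 ^ (lam * p) * C, by positivity,
    hB.mul_exponents hC (one_pos.trans_le hp).ne' hlam⟩

/-- a `(q,p)`-balance condition implies a `(λq,λp)`-balance condition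
for every `λ ≥ 1`, in a connected metric two-measure space. -/
theorem stmt3 {X : Type*} [MetricSpace X] [MeasurableSpace X] [BorelSpace X]
    [ConnectedSpace X] (ν μ : Measure X) (q p lam : ℝ)
    (hq : 1 ≤ q) (hp : 1 ≤ p) (hlam : 1 ≤ lam)
    (cν cμ : ℝ) (hcν : 1 < cν) (hcμ : 1 < cμ)
    (hνd : IsDoubling ν cν) (hμd : IsDoubling μ cμ)
    (hνf : FinitePosOnBalls ν) (hμf : FinitePosOnBalls μ)
    (hbal : ∃ C > 0, Balance ν μ q p C) :
    ∃ C > 0, Balance ν μ (lam * q) (lam * p) C :=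
  stmt3_general ν μ q p lam hp hlam hbal
end
end

section
/- Let 1 ≤ p ≤ q < ∞. If a connected metric two-measure space X = (X,d,ν,μ) satisfies a p-balance condition, then X satisfies a q-balance condition. -/
open MeasureTheory Metric Set ENNReal

noncomputable section

/-- for `1 ≤ p ≤ q`, a `p`-balance condition implies a `q`-balance
condition, in a connected metric two-measure space. -/
theorem stmt4 {X : Type*} [MetricSpace X] [MeasurableSpace X] [BorelSpace X]
    [ConnectedSpace X] (ν μ : Measure X) (p q : ℝ)
    (hp : 1 ≤ p) (hpq : p ≤ q)
    (cν cμ : ℝ) (hcν : 1 < cν) (hcμ : 1 < cμ)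
    (hνd : IsDoubling ν cν) (hμd : IsDoubling μ cμ)
    (hνf : FinitePosOnBalls ν) (hμf : FinitePosOnBalls μ)
    (hbal : ∃ C > 0, PBalance ν μ p C) :
    ∃ C > 0, PBalance ν μ q C := by
  obtain ⟨C, hC, hPB⟩ := hbal
  refine ⟨(2 : ℝ) ^ (q - p) * C, by positivity, ?_⟩
  intro x R x' r' hR hx' hr' hr'le
  have h := hPB x R x' r' hR hx' hr' hr'le
  set d' := Metric.diam (Metric.ball x' r') with hd'def
  set d := Metric.diam (Metric.ball x R) with hddef
  have hd : 0 < d := lt_of_lt_of_le hr' hr'le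
  have hd'0 : 0 ≤ d' := Metric.diam_nonneg
  have ht0 : (0 : ℝ) ≤ d' / d := div_nonneg hd'0 hd.le
  have ht2 : d' / d ≤ 2 := by
    have h1 : d' ≤ 2 * r' := Metric.diam_ball hr'.le
    have h2 : d' ≤ 2 * d := h1.trans (by linarith)
    rw [div_le_iff₀ hd]; linarith
  have hνnn : (0 : ℝ) ≤ (ν (Metric.ball x' r')).toReal / (ν (Metric.ball x R)).toReal := by
    positivity
  have hμnn : (0 : ℝ) ≤ (μ (Metric.ball x' r')).toReal / (μ (Metric.ball x R)).toReal := by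
    positivity
  rcases eq_or_lt_of_le ht0 with ht | ht
  · rw [← ht, Real.zero_rpow (by linarith : q ≠ 0), zero_mul]
    positivity
  · have hq : (d' / d) ^ q = (d' / d) ^ (q - p) * (d' / d) ^ p := by
      rw [← Real.rpow_add ht]; ring_nf
    rw [hq, mul_assoc, mul_assoc]
    refine mul_le_mul ?_ h (by positivity) (by positivity)
    exact Real.rpow_le_rpow ht0 ht2 (by linarith)
end
end

section
/- Let 1 ≤ q' ≤ q < ∞ and p ≤ p' < ∞. If a connected metric two-measure space X satisfies a (q,p)-balance condition, then X satisfies a (q',p')-balance condition. -/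
open MeasureTheory Metric Set ENNReal

noncomputable section

lemma ratio_le_sq {X : Type*} [MetricSpace X] [MeasurableSpace X]
    (ν : Measure X) (c : ℝ) (hc : 1 < c) (hd : IsDoubling ν c) (hf : FinitePosOnBalls ν)
    (x x' : X) (R r' : ℝ) (hR : 0 < R) (hx' : x' ∈ Metric.ball x R) (hr' : 0 < r')
    (hle : r' ≤ 2 * R) :
    (ν (Metric.ball x' r')).toReal / (ν (Metric.ball x R)).toReal ≤ c ^ 2 := by
  have hsub : Metric.ball x' r' ⊆ Metric.ball x (2 * (2 * R)) := by
    intro y hy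
    rw [Metric.mem_ball] at *
    calc dist y x ≤ dist y x' + dist x' x := dist_triangle _ _ _
      _ < r' + R := add_lt_add hy hx'
      _ ≤ 2 * R + R := by linarith
      _ ≤ 2 * (2 * R) := by linarith
  have h1 : ν (Metric.ball x' r') ≤ ENNReal.ofReal (c ^ 2) * ν (Metric.ball x R) := by
    calc ν (Metric.ball x' r') ≤ ν (Metric.ball x (2 * (2 * R))) := measure_mono hsub
      _ ≤ ENNReal.ofReal c * ν (Metric.ball x (2 * R)) := hd x (2 * R) (by linarith)
      _ ≤ ENNReal.ofReal c * (ENNReal.ofReal c * ν (Metric.ball x R)) :=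
          mul_le_mul_right (hd x R hR) _
      _ = ENNReal.ofReal (c ^ 2) * ν (Metric.ball x R) := by
          rw [← mul_assoc, ← ENNReal.ofReal_mul (by linarith), sq]
  obtain ⟨hpos, hfin⟩ := hf x R hR
  have hBt : 0 < (ν (Metric.ball x R)).toReal := ENNReal.toReal_pos hpos.ne' hfin.ne
  rw [div_le_iff₀ hBt]
  have := ENNReal.toReal_mono (a := ν (Metric.ball x' r'))
    (b := ENNReal.ofReal (c ^ 2) * ν (Metric.ball x R))
    (ENNReal.mul_ne_top ENNReal.ofReal_ne_top hfin.ne) h1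
  rwa [ENNReal.toReal_mul, ENNReal.toReal_ofReal (by positivity)] at this

/-- for `1 ≤ q' ≤ q` and `p ≤ p'`, a `(q,p)`-balance condition implies a
`(q',p')`-balance condition, in a connected metric two-measure space. -/
theorem stmt5 {X : Type*} [MetricSpace X] [MeasurableSpace X] [BorelSpace X]
    [ConnectedSpace X] (ν μ : Measure X) (q q' p p' : ℝ)
    (hq' : 1 ≤ q') (hq'q : q' ≤ q) (hp : 1 ≤ p) (hpp' : p ≤ p')
    (cν cμ : ℝ) (hcν : 1 < cν) (hcμ : 1 < cμ)
    (hνd : IsDoubling ν cν) (hμd : IsDoubling μ cμ)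
    (hνf : FinitePosOnBalls ν) (hμf : FinitePosOnBalls μ)
    (hbal : ∃ C > 0, Balance ν μ q p C) :
    ∃ C > 0, Balance ν μ q' p' C := by
  obtain ⟨C, hC, hbal⟩ := hbal
  have hq'0 : (0:ℝ) < q' := by linarith
  have hq0 : (0:ℝ) < q := by linarith
  have hp0 : (0:ℝ) < p := by linarith
  have hp'0 : (0:ℝ) < p' := by linarith
  set K1 : ℝ := (cν ^ 2) ^ (1 / q' - 1 / q) with hK1def
  set K2 : ℝ := (cμ ^ 2) ^ (1 / p - 1 / p') with hK2def
  have hcν2 : (0:ℝ) < cν ^ 2 := by positivity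
  have hcμ2 : (0:ℝ) < cμ ^ 2 := by positivity
  have hK1 : 0 < K1 := Real.rpow_pos_of_pos hcν2 _
  have hK2 : 0 < K2 := Real.rpow_pos_of_pos hcμ2 _
  have hCp : 0 < C ^ (1 / p) := Real.rpow_pos_of_pos hC _
  set M : ℝ := K1 * C ^ (1 / p) * K2 with hMdef
  have hM : 0 < M := by positivity
  refine ⟨M ^ p', Real.rpow_pos_of_pos hM _, ?_⟩
  intro x R x' r' hR hx' hr' hrd
  have hMeq : (M ^ p') ^ (1 / p') = M := by
    rw [← Real.rpow_mul hM.le, mul_one_div_cancel hp'0.ne', Real.rpow_one]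
  rw [hMeq]
  have hle : r' ≤ 2 * R := hrd.trans (Metric.diam_ball hR.le)
  set a := Metric.diam (Metric.ball x' r') / Metric.diam (Metric.ball x R) with hadef
  set b := (ν (Metric.ball x' r')).toReal / (ν (Metric.ball x R)).toReal with hbdef
  set m := (μ (Metric.ball x' r')).toReal / (μ (Metric.ball x R)).toReal with hmdef
  have ha0 : 0 ≤ a := div_nonneg Metric.diam_nonneg Metric.diam_nonneg
  have hb0 : 0 < b := by
    obtain ⟨h1, h2⟩ := hνf x' r' hr'
    obtain ⟨h3, h4⟩ := hνf x R hR
    exact div_pos (ENNReal.toReal_pos h1.ne' h2.ne) (ENNReal.toReal_pos h3.ne' h4.ne)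
  have hm0 : 0 < m := by
    obtain ⟨h1, h2⟩ := hμf x' r' hr'
    obtain ⟨h3, h4⟩ := hμf x R hR
    exact div_pos (ENNReal.toReal_pos h1.ne' h2.ne) (ENNReal.toReal_pos h3.ne' h4.ne)
  have hbν : b ≤ cν ^ 2 := ratio_le_sq ν cν hcν hνd hνf x x' R r' hR hx' hr' hle
  have hmμ : m ≤ cμ ^ 2 := ratio_le_sq μ cμ hcμ hμd hμf x x' R r' hR hx' hr' hle
  have hδq : (0:ℝ) ≤ 1 / q' - 1 / q :=
    sub_nonneg.mpr (one_div_le_one_div_of_le hq'0 hq'q)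
  have hδp : (0:ℝ) ≤ 1 / p - 1 / p' :=
    sub_nonneg.mpr (one_div_le_one_div_of_le hp0 hpp')
  have hbq : b ^ (1 / q') ≤ K1 * b ^ (1 / q) := by
    have hs : b ^ (1 / q') = b ^ (1 / q) * b ^ (1 / q' - 1 / q) := by
      rw [← Real.rpow_add hb0]; congr 1; ring
    have h2 : b ^ (1 / q' - 1 / q) ≤ K1 := Real.rpow_le_rpow hb0.le hbν hδq
    rw [hs, mul_comm]
    exact mul_le_mul_of_nonneg_right h2 (Real.rpow_nonneg hb0.le _)
  have hmp : m ^ (1 / p) ≤ K2 * m ^ (1 / p') := by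
    have hs : m ^ (1 / p) = m ^ (1 / p') * m ^ (1 / p - 1 / p') := by
      rw [← Real.rpow_add hm0]; congr 1; ring
    have h2 : m ^ (1 / p - 1 / p') ≤ K2 := Real.rpow_le_rpow hm0.le hmμ hδp
    rw [hs, mul_comm]
    exact mul_le_mul_of_nonneg_right h2 (Real.rpow_nonneg hm0.le _)
  have hmain : a * b ^ (1 / q) ≤ C ^ (1 / p) * m ^ (1 / p) :=
    hbal x R x' r' hR hx' hr' hrd
  calc a * b ^ (1 / q') ≤ a * (K1 * b ^ (1 / q)) :=
        mul_le_mul_of_nonneg_left hbq ha0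
    _ = K1 * (a * b ^ (1 / q)) := by ring
    _ ≤ K1 * (C ^ (1 / p) * m ^ (1 / p)) := mul_le_mul_of_nonneg_left hmain hK1.le
    _ ≤ K1 * (C ^ (1 / p) * (K2 * m ^ (1 / p'))) := by
        apply mul_le_mul_of_nonneg_left _ hK1.le
        exact mul_le_mul_of_nonneg_left hmp hCp.le
    _ = M * m ^ (1 / p') := by rw [hMdef]; ring
end
end

section
/- Let 1 < p, q < ∞ and suppose the connected metric two-measure space X = (X,d,ν,μ) satisfies a (q,p)-balance condition. Assume further that ν(B')/ν(B) ≤ C (r'/diam(B))^{σ'} and μ(B')/μ(B) ≥ 2^{-s'} (r'/diam(B))^{s'} for all balls B, B'=B(x',r') with x' ∈ B, 0 < r' ≤ diam(B), for some constants σ', s' > 0. Then for every 0 < δ ≤ q − 1 there exists 0 < ε ≤ p − 1 such that X satisfies a (q−δ, p−ε)-balance condition; in fact any ε with 1/(p−ε) − 1/p ≤ (1/(q−δ) − 1/q)·σ'/s' works. -/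
/-!
Passing from `q` to `q' < q` multiplies the left side of the balance inequality by
`(ν B'/ν B)^α`, `α = 1/q' - 1/q`, and passing from `p` to `p' < p` multiplies the right side by
`(μ B'/μ B)^β`, `β = 1/p' - 1/p`. With `u = r'/diam B ≤ 1`, the decay of `ν` bounds the first factor
by `Cν^α u^{σ'α}`, the growth of `μ` bounds the second from below by `2^{-s'β} u^{s'β}`, and
`s'β ≤ σ'α` gives `u^{σ'α} ≤ u^{s'β}`, so the new inequality holds with a larger constant.
-/

open MeasureTheory Metric Set ENNReal

noncomputable section

lemma rpow_le_mul_rpow_of_decay {a b c m u σ s α β : ℝ}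
    (ha : 0 ≤ a) (hc : 0 ≤ c) (hm : 0 < m) (hu0 : 0 < u) (hu1 : u ≤ 1)
    (hα : 0 ≤ α) (hβ : 0 ≤ β) (hexp : s * β ≤ σ * α)
    (hac : a ≤ c * u ^ σ) (hbu : m * u ^ s ≤ b) :
    a ^ α ≤ c ^ α * m ^ (-β) * b ^ β := by
  have hu_pow : u ^ (s * β) = m ^ (-β) * (m * u ^ s) ^ β := by
    rw [Real.mul_rpow hm.le (Real.rpow_nonneg hu0.le _), ← mul_assoc,
      ← Real.rpow_add hm, neg_add_cancel, Real.rpow_zero, one_mul, ← Real.rpow_mul hu0.le]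
  calc a ^ α ≤ (c * u ^ σ) ^ α := Real.rpow_le_rpow ha hac hα
    _ = c ^ α * u ^ (σ * α) := by
      rw [Real.mul_rpow hc (Real.rpow_nonneg hu0.le _), ← Real.rpow_mul hu0.le]
    _ ≤ c ^ α * u ^ (s * β) := by
      gcongr c ^ α * ?_
      exact Real.rpow_le_rpow_of_exponent_ge hu0 hu1 hexp
    _ ≤ c ^ α * (m ^ (-β) * b ^ β) := by
      rw [hu_pow]
      gcongr
    _ = c ^ α * m ^ (-β) * b ^ β := by ring

lemma mul_rpow_add_le {t a b C K e f α β : ℝ} (ha : 0 ≤ a) (hb : 0 ≤ b) (hC : 0 ≤ C)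
    (hea : e + α ≠ 0) (hfb : f + β ≠ 0)
    (h : t * a ^ e ≤ C * b ^ f) (hab : a ^ α ≤ K * b ^ β) :
    t * a ^ (e + α) ≤ C * K * b ^ (f + β) := by
  rw [Real.rpow_add' ha hea, Real.rpow_add' hb hfb]
  calc t * (a ^ e * a ^ α) = t * a ^ e * a ^ α := by ring
    _ ≤ C * b ^ f * a ^ α := by gcongr
    _ ≤ C * b ^ f * (K * b ^ β) := by gcongr
    _ = C * K * (b ^ f * b ^ β) := by ring

theorem Balance.of_decay {X : Type*} [MetricSpace X] [MeasurableSpace X] {ν μ : Measure X}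
    {q p q' p' C c m σ s : ℝ} (hbal : Balance ν μ q p C)
    (hC : 0 ≤ C) (hc : 0 ≤ c) (hm : 0 < m)
    (hq' : q' ≠ 0) (hp' : p' ≠ 0) (hα : 0 ≤ 1 / q' - 1 / q) (hβ : 0 ≤ 1 / p' - 1 / p)
    (hexp : s * (1 / p' - 1 / p) ≤ σ * (1 / q' - 1 / q))
    (hν : ∀ (x : X) (R : ℝ) (x' : X) (r' : ℝ), 0 < R → x' ∈ Metric.ball x R → 0 < r' →
      r' ≤ Metric.diam (Metric.ball x R) →
      (ν (Metric.ball x' r')).toReal / (ν (Metric.ball x R)).toReal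
        ≤ c * (r' / Metric.diam (Metric.ball x R)) ^ σ)
    (hμ : ∀ (x : X) (R : ℝ) (x' : X) (r' : ℝ), 0 < R → x' ∈ Metric.ball x R → 0 < r' →
      r' ≤ Metric.diam (Metric.ball x R) →
      m * (r' / Metric.diam (Metric.ball x R)) ^ s
        ≤ (μ (Metric.ball x' r')).toReal / (μ (Metric.ball x R)).toReal) :
    Balance ν μ q' p'
      ((C ^ (1 / p) * (c ^ (1 / q' - 1 / q) * m ^ (-(1 / p' - 1 / p)))) ^ p') := by
  intro x R x' r' hR hx' hr' hle
  have hD : 0 < Metric.diam (Metric.ball x R) := hr'.trans_le hle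
  have hK : 0 ≤ C ^ (1 / p) * (c ^ (1 / q' - 1 / q) * m ^ (-(1 / p' - 1 / p))) := by positivity
  rw [← Real.rpow_mul hK, mul_one_div_cancel hp', Real.rpow_one]
  have key := mul_rpow_add_le (by positivity) (by positivity) (by positivity)
    (by rw [add_sub_cancel]; exact one_div_ne_zero hq')
    (by rw [add_sub_cancel]; exact one_div_ne_zero hp')
    (hbal x R x' r' hR hx' hr' hle)
    (rpow_le_mul_rpow_of_decay (by positivity) hc hm (div_pos hr' hD)
      ((div_le_one hD).2 hle) hα hβ hexp
      (hν x R x' r' hR hx' hr' hle) (hμ x R x' r' hR hx' hr' hle))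
  simpa only [add_sub_cancel, mul_assoc] using key

theorem stmt6_general {X : Type*} [MetricSpace X] [MeasurableSpace X]
    (ν μ : Measure X) (q p : ℝ)
    (Cb : ℝ) (hCb : 0 < Cb) (hbal : Balance ν μ q p Cb)
    (Cν σ' s' : ℝ) (hCν : 0 < Cν) (hs' : 0 < s')
    (hν : ∀ (x : X) (R : ℝ) (x' : X) (r' : ℝ), 0 < R → x' ∈ Metric.ball x R → 0 < r' →
      r' ≤ Metric.diam (Metric.ball x R) →
      (ν (Metric.ball x' r')).toReal / (ν (Metric.ball x R)).toReal
        ≤ Cν * (r' / Metric.diam (Metric.ball x R)) ^ σ')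
    (hμ : ∀ (x : X) (R : ℝ) (x' : X) (r' : ℝ), 0 < R → x' ∈ Metric.ball x R → 0 < r' →
      r' ≤ Metric.diam (Metric.ball x R) →
      (2 : ℝ) ^ (-s') * (r' / Metric.diam (Metric.ball x R)) ^ s'
        ≤ (μ (Metric.ball x' r')).toReal / (μ (Metric.ball x R)).toReal) :
    ∀ δ : ℝ, 0 < δ → δ ≤ q - 1 →
      ∀ ε : ℝ, 0 < ε → ε ≤ p - 1 →
        1 / (p - ε) - 1 / p ≤ (1 / (q - δ) - 1 / q) * σ' / s' →
        ∃ C > 0, Balance ν μ (q - δ) (p - ε) C := by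
  intro δ hδ hδq ε hε hεp hcond
  have hα : 0 < 1 / (q - δ) - 1 / q :=
    sub_pos.2 (one_div_lt_one_div_of_lt (by linarith) (by linarith))
  have hβ : 0 < 1 / (p - ε) - 1 / p :=
    sub_pos.2 (one_div_lt_one_div_of_lt (by linarith) (by linarith))
  have hexp : s' * (1 / (p - ε) - 1 / p) ≤ σ' * (1 / (q - δ) - 1 / q) := by
    rw [le_div_iff₀ hs'] at hcond
    linarith
  exact ⟨_, by positivity, hbal.of_decay hCb.le hCν.le (by positivity) (by linarith)
    (by linarith) hα.le hβ.le hexp hν hμ⟩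

/-- if `X` satisfies a `(q,p)`-balance condition and the measures satisfy the
quantitative decay estimates `ν(B')/ν(B) ≤ Cν (r'/diam B)^{σ'}` and
`μ(B')/μ(B) ≥ 2^{-s'} (r'/diam B)^{s'}`, then for every `0 < δ ≤ q-1`, every
`0 < ε ≤ p-1` with `1/(p-ε) - 1/p ≤ (1/(q-δ) - 1/q)·σ'/s'` yields a
`(q-δ, p-ε)`-balance condition. -/
theorem stmt6 {X : Type*} [MetricSpace X] [MeasurableSpace X] [BorelSpace X]
    [ConnectedSpace X] (ν μ : Measure X) (q p : ℝ) (hq : 1 < q) (hp : 1 < p)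
    (cν cμ : ℝ) (hcν : 1 < cν) (hcμ : 1 < cμ)
    (hνd : IsDoubling ν cν) (hμd : IsDoubling μ cμ)
    (hνf : FinitePosOnBalls ν) (hμf : FinitePosOnBalls μ)
    (Cb : ℝ) (hCb : 0 < Cb) (hbal : Balance ν μ q p Cb)
    (Cν σ' s' : ℝ) (hCν : 0 < Cν) (hσ' : 0 < σ') (hs' : 0 < s')
    (hν : ∀ (x : X) (R : ℝ) (x' : X) (r' : ℝ), 0 < R → x' ∈ Metric.ball x R → 0 < r' →
      r' ≤ Metric.diam (Metric.ball x R) →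
      (ν (Metric.ball x' r')).toReal / (ν (Metric.ball x R)).toReal
        ≤ Cν * (r' / Metric.diam (Metric.ball x R)) ^ σ')
    (hμ : ∀ (x : X) (R : ℝ) (x' : X) (r' : ℝ), 0 < R → x' ∈ Metric.ball x R → 0 < r' →
      r' ≤ Metric.diam (Metric.ball x R) →
      (2 : ℝ) ^ (-s') * (r' / Metric.diam (Metric.ball x R)) ^ s'
        ≤ (μ (Metric.ball x' r')).toReal / (μ (Metric.ball x R)).toReal) :
    ∀ δ : ℝ, 0 < δ → δ ≤ q - 1 →
      ∀ ε : ℝ, 0 < ε → ε ≤ p - 1 →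
        1 / (p - ε) - 1 / p ≤ (1 / (q - δ) - 1 / q) * σ' / s' →
        ∃ C > 0, Balance ν μ (q - δ) (p - ε) C :=
  stmt6_general ν μ q p Cb hCb hbal Cν σ' s' hCν hs' hν hμ
end
end

section
/- Let 1 < p < ∞ and let X = (X,d,ν,μ) be a connected metric two-measure space. Suppose X satisfies a Ψ-bumped p-balance condition with a function Ψ : (0,∞) → (0,∞) for which there exist t₀ > 0 and 0 < δ < 1 such that Ψ(t) ≤ δ for all 0 < t ≤ t₀. Then there exists 0 < ε < p − 1 such that X satisfies a (p−ε)-balance condition. -/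
open MeasureTheory Metric Set ENNReal

noncomputable section

/-- The `Ψ`-bumped `p`-balance condition:
`(diam B₂/diam B)^p (ν B₂/ν B) ≤ Ψ(diam B₂/diam B) (μ B₂/μ B)` for all balls
`B`, `B₂ = B(y,t)` with `y ∈ B` and `0 < t ≤ diam B`. -/
def BumpedBalance {X : Type*} [MetricSpace X] [MeasurableSpace X]
    (ν μ : Measure X) (p : ℝ) (Ψ : ℝ → ℝ) : Prop :=
  ∀ (x : X) (R : ℝ) (y : X) (t : ℝ), 0 < R → y ∈ Metric.ball x R → 0 < t →
    t ≤ Metric.diam (Metric.ball x R) →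
    (Metric.diam (Metric.ball y t) / Metric.diam (Metric.ball x R)) ^ p *
        ((ν (Metric.ball y t)).toReal / (ν (Metric.ball x R)).toReal)
      ≤ Ψ (Metric.diam (Metric.ball y t) / Metric.diam (Metric.ball x R)) *
        ((μ (Metric.ball y t)).toReal / (μ (Metric.ball x R)).toReal)

lemma aux_half_le_diam {X : Type*} [MetricSpace X] [ConnectedSpace X] (y : X) (t : ℝ)
    (ht : 0 < t) (hne : Metric.ball y t ≠ Set.univ) :
    t / 2 ≤ Metric.diam (Metric.ball y t) := by
  by_contra h
  push_neg at h
  apply hne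
  have hclosed : IsClosed (Metric.ball y t) := by
    apply isClosed_of_closure_subset
    intro a ha
    obtain ⟨b, hb, hab⟩ := Metric.mem_closure_iff.mp ha (t/4) (by positivity)
    have hby : dist b y ≤ Metric.diam (Metric.ball y t) :=
      Metric.dist_le_diam_of_mem Metric.isBounded_ball hb (Metric.mem_ball_self ht)
    have : dist a y < t := by
      calc dist a y ≤ dist a b + dist b y := dist_triangle a b y
        _ < t/4 + t/2 := by linarith
        _ ≤ t := by linarith
    exact Metric.mem_ball.mpr this
  exact (IsClopen.eq_univ ⟨hclosed, Metric.isOpen_ball⟩ ⟨y, Metric.mem_ball_self ht⟩)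

lemma aux_min_le_diam {X : Type*} [MetricSpace X] [ConnectedSpace X] (y : X) (t : ℝ)
    (ht : 0 < t) (s : Set X) :
    min t (Metric.diam s) / 2 ≤ Metric.diam (Metric.ball y t) := by
  by_cases hne : Metric.ball y t = Set.univ
  · have h1 : Metric.diam s ≤ Metric.diam (Metric.ball y t) := by
      rw [hne]
      exact Metric.diam_mono (Set.subset_univ s) (by rw [← hne]; exact Metric.isBounded_ball)
    have h2 : 0 ≤ Metric.diam s := Metric.diam_nonneg
    calc min t (Metric.diam s) / 2 ≤ Metric.diam s / 2 := by
          exact div_le_div_of_nonneg_right (min_le_right _ _) (by norm_num)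
        _ ≤ Metric.diam s := by linarith
        _ ≤ _ := h1
  · calc min t (Metric.diam s) / 2 ≤ t / 2 := by
          exact div_le_div_of_nonneg_right (min_le_left _ _) (by norm_num)
        _ ≤ _ := aux_half_le_diam y t ht hne

lemma aux_doubling {X : Type*} [MetricSpace X] [MeasurableSpace X] {ν : Measure X} {c : ℝ}
    (hν : IsDoubling ν c)
    (x : X) (r : ℝ) (hr : 0 < r) (m : ℕ) :
    ν (Metric.ball x (2^m * r)) ≤ ENNReal.ofReal c ^ m * ν (Metric.ball x r) := by
  induction m with
  | zero => simp
  | succ n ih =>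
    have h1 : (2:ℝ)^(n+1) * r = 2 * (2^n * r) := by ring
    rw [h1]
    calc ν (Metric.ball x (2 * (2^n * r))) ≤ ENNReal.ofReal c * ν (Metric.ball x (2^n * r)) :=
          hν x _ (by positivity)
      _ ≤ ENNReal.ofReal c * (ENNReal.ofReal c ^ n * ν (Metric.ball x r)) :=
          mul_le_mul_right ih _
      _ = ENNReal.ofReal c ^ (n+1) * ν (Metric.ball x r) := by ring

set_option maxHeartbeats 2000000 in
/-- a `Ψ`-bumped `p`-balance condition with `Ψ ≤ δ < 1` near `0`
implies a `(p-ε)`-balance condition for some `0 < ε < p-1`. -/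
theorem stmt7 {X : Type*} [MetricSpace X] [MeasurableSpace X] [BorelSpace X]
    [ConnectedSpace X] (ν μ : Measure X) (p : ℝ) (hp : 1 < p)
    (cν cμ : ℝ) (hcν : 1 < cν) (hcμ : 1 < cμ)
    (hνd : IsDoubling ν cν) (hμd : IsDoubling μ cμ)
    (hνf : FinitePosOnBalls ν) (hμf : FinitePosOnBalls μ)
    (Ψ : ℝ → ℝ) (hΨpos : ∀ t : ℝ, 0 < t → 0 < Ψ t)
    (t₀ δ : ℝ) (ht₀ : 0 < t₀) (hδ0 : 0 < δ) (hδ1 : δ < 1)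
    (hΨδ : ∀ t : ℝ, 0 < t → t ≤ t₀ → Ψ t ≤ δ)
    (hbump : BumpedBalance ν μ p Ψ) :
    ∃ ε : ℝ, 0 < ε ∧ ε < p - 1 ∧ ∃ C > 0, PBalance ν μ (p - ε) C := by
  set ρ : ℝ := min t₀ 1 / 8 with hρdef
  have hρ0 : 0 < ρ := by
    have : 0 < min t₀ 1 := lt_min ht₀ one_pos
    positivity
  have hρ8 : ρ ≤ 1/8 := by
    have : min t₀ 1 ≤ 1 := min_le_right _ _
    rw [hρdef]; linarith
  have hρ1 : ρ < 1 := by linarith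
  have hρt₀ : 8 * ρ ≤ t₀ := by
    have : min t₀ 1 ≤ t₀ := min_le_left _ _
    rw [hρdef]; linarith
  obtain ⟨m, hm⟩ : ∃ m : ℕ, 1/ρ ≤ 2^m := by
    obtain ⟨m, hm⟩ := pow_unbounded_of_one_lt (1/ρ) (by norm_num : (1:ℝ) < 2)
    exact ⟨m, hm.le⟩
  have hlogρ : Real.log ρ < 0 := Real.log_neg hρ0 hρ1
  have hlogδ : Real.log δ < 0 := Real.log_neg hδ0 hδ1
  set ε : ℝ := min ((p-1)/2) (Real.log δ / Real.log ρ) with hεdef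
  have hε0 : 0 < ε := by
    apply lt_min (by linarith)
    exact div_pos_of_neg_of_neg hlogδ hlogρ
  have hεlt : ε < p - 1 := by
    have := min_le_left ((p-1)/2) (Real.log δ / Real.log ρ)
    rw [hεdef]; linarith [this]
  have hpε0 : (0:ℝ) ≤ p - ε := by linarith
  have hδρε : δ ≤ ρ ^ ε := by
    have h1 : ε ≤ Real.log δ / Real.log ρ := min_le_right _ _
    have h2 : Real.log δ ≤ ε * Real.log ρ := by
      have := mul_le_mul_of_nonpos_right h1 hlogρ.le
      rwa [div_mul_cancel₀ _ (ne_of_lt hlogρ)] at this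
    calc δ = Real.exp (Real.log δ) := (Real.exp_log hδ0).symm
      _ ≤ Real.exp (ε * Real.log ρ) := Real.exp_le_exp.mpr h2
      _ = ρ ^ ε := by rw [Real.rpow_def_of_pos hρ0 ε, mul_comm]
  refine ⟨ε, hε0, hεlt, (32:ℝ)^p * cν^3 * cμ^m, by positivity, ?_⟩
  intro x R x' r' hR hx' hr' hr'D
  set D := Metric.diam (Metric.ball x R) with hDdef
  have hD0 : 0 < D := lt_of_lt_of_le hr' hr'D
  have hD2R : D ≤ 2 * R := Metric.diam_ball hR.le
  -- positivity of measures
  have hνpos : ∀ (y : X) (t : ℝ), 0 < t → 0 < (ν (Metric.ball y t)).toReal := fun y t ht =>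
    ENNReal.toReal_pos (hνf y t ht).1.ne' (hνf y t ht).2.ne
  have hμpos : ∀ (y : X) (t : ℝ), 0 < t → 0 < (μ (Metric.ball y t)).toReal := fun y t ht =>
    ENNReal.toReal_pos (hμf y t ht).1.ne' (hμf y t ht).2.ne
  -- diameter bounds for the chain balls
  have hspos : ∀ j : ℕ, 0 < 2*D*ρ^j := fun j => by positivity
  have hdlow : ∀ j : ℕ, D * ρ^j / 2 ≤ Metric.diam (Metric.ball x' (2*D*ρ^j)) := by
    intro j
    have h1 := aux_min_le_diam x' (2*D*ρ^j) (hspos j) (Metric.ball x R)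
    have h2 : D * ρ^j ≤ min (2*D*ρ^j) D := by
      apply le_min
      · nlinarith [pow_pos hρ0 j]
      · nlinarith [pow_le_one₀ hρ0.le hρ1.le (n := j), pow_pos hρ0 j]
    calc D * ρ^j / 2 ≤ min (2*D*ρ^j) (Metric.diam (Metric.ball x R)) / 2 := by
          rw [← hDdef]; linarith
      _ ≤ _ := h1
  have hdhigh : ∀ j : ℕ, Metric.diam (Metric.ball x' (2*D*ρ^j)) ≤ 4*D*ρ^j := by
    intro j
    calc Metric.diam (Metric.ball x' (2*D*ρ^j)) ≤ 2 * (2*D*ρ^j) := Metric.diam_ball (by positivity)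
      _ = 4*D*ρ^j := by ring
  have hdpos : ∀ j : ℕ, 0 < Metric.diam (Metric.ball x' (2*D*ρ^j)) := fun j =>
    lt_of_lt_of_le (by positivity) (hdlow j)
  -- single step of the chain
  have step : ∀ j : ℕ,
      (Metric.diam (Metric.ball x' (2*D*ρ^(j+1))) / Metric.diam (Metric.ball x' (2*D*ρ^j))) ^ p *
        ((ν (Metric.ball x' (2*D*ρ^(j+1)))).toReal / (ν (Metric.ball x' (2*D*ρ^j))).toReal)
      ≤ δ * ((μ (Metric.ball x' (2*D*ρ^(j+1)))).toReal / (μ (Metric.ball x' (2*D*ρ^j))).toReal) := by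
    intro j
    have hsub : 2*D*ρ^(j+1) ≤ Metric.diam (Metric.ball x' (2*D*ρ^j)) := by
      have hpj : 0 < ρ^j := pow_pos hρ0 j
      have hmul : 2*D*ρ^j*ρ ≤ 2*D*ρ^j*(1/8) := mul_le_mul_of_nonneg_left hρ8 (by positivity)
      have hq : 2*D*ρ^(j+1) ≤ D * ρ^j / 2 := by
        rw [pow_succ]
        nlinarith [mul_pos hD0 hpj]
      linarith [hdlow j]
    have hb := hbump x' (2*D*ρ^j) x' (2*D*ρ^(j+1)) (hspos j) (Metric.mem_ball_self (hspos j))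
      (hspos (j+1)) hsub
    have hratio0 : 0 < Metric.diam (Metric.ball x' (2*D*ρ^(j+1))) /
        Metric.diam (Metric.ball x' (2*D*ρ^j)) := div_pos (hdpos (j+1)) (hdpos j)
    have hratiot₀ : Metric.diam (Metric.ball x' (2*D*ρ^(j+1))) /
        Metric.diam (Metric.ball x' (2*D*ρ^j)) ≤ t₀ := by
      rw [div_le_iff₀ (hdpos j)]
      have h1 := hdhigh (j+1)
      have h2 := hdlow j
      have hpj : 0 < ρ^j := pow_pos hρ0 j
      calc Metric.diam (Metric.ball x' (2*D*ρ^(j+1))) ≤ 4*D*ρ^(j+1) := h1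
        _ = (8*ρ) * (D * ρ^j / 2) := by rw [pow_succ]; ring
        _ ≤ t₀ * (D * ρ^j / 2) := by
            apply mul_le_mul_of_nonneg_right hρt₀; positivity
        _ ≤ t₀ * Metric.diam (Metric.ball x' (2*D*ρ^j)) := by
            apply mul_le_mul_of_nonneg_left h2 ht₀.le
    have hΨle : Ψ (Metric.diam (Metric.ball x' (2*D*ρ^(j+1))) /
        Metric.diam (Metric.ball x' (2*D*ρ^j))) ≤ δ := hΨδ _ hratio0 hratiot₀
    calc _ ≤ Ψ (Metric.diam (Metric.ball x' (2*D*ρ^(j+1))) /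
          Metric.diam (Metric.ball x' (2*D*ρ^j))) *
          ((μ (Metric.ball x' (2*D*ρ^(j+1)))).toReal / (μ (Metric.ball x' (2*D*ρ^j))).toReal) := hb
      _ ≤ δ * ((μ (Metric.ball x' (2*D*ρ^(j+1)))).toReal / (μ (Metric.ball x' (2*D*ρ^j))).toReal) := by
          apply mul_le_mul_of_nonneg_right hΨle
          positivity
  -- the telescoped chain
  have chain : ∀ j : ℕ,
      (Metric.diam (Metric.ball x' (2*D*ρ^j)) / Metric.diam (Metric.ball x' (2*D))) ^ p *
        ((ν (Metric.ball x' (2*D*ρ^j))).toReal / (ν (Metric.ball x' (2*D))).toReal)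
      ≤ δ^j * ((μ (Metric.ball x' (2*D*ρ^j))).toReal / (μ (Metric.ball x' (2*D))).toReal) := by
    intro j
    induction j with
    | zero =>
      simp only [pow_zero, mul_one]
      rw [div_self (ne_of_gt (by simpa using hdpos 0)),
        div_self (ne_of_gt (by simpa using hνpos x' (2*D) (by positivity))),
        div_self (ne_of_gt (by simpa using hμpos x' (2*D) (by positivity))),
        Real.one_rpow]
    | succ n ih =>
      have hd0 : Metric.diam (Metric.ball x' (2*D)) ≠ 0 := by
        have := hdpos 0; simp only [pow_zero, mul_one] at this; exact ne_of_gt this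
      have hdn : Metric.diam (Metric.ball x' (2*D*ρ^n)) ≠ 0 := ne_of_gt (hdpos n)
      have hνn : (ν (Metric.ball x' (2*D*ρ^n))).toReal ≠ 0 := ne_of_gt (hνpos x' _ (hspos n))
      have hν0 : (ν (Metric.ball x' (2*D))).toReal ≠ 0 := ne_of_gt (hνpos x' _ (by positivity))
      have hμn : (μ (Metric.ball x' (2*D*ρ^n))).toReal ≠ 0 := ne_of_gt (hμpos x' _ (hspos n))
      have hsplitd : Metric.diam (Metric.ball x' (2*D*ρ^(n+1))) / Metric.diam (Metric.ball x' (2*D))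
          = (Metric.diam (Metric.ball x' (2*D*ρ^(n+1))) / Metric.diam (Metric.ball x' (2*D*ρ^n))) *
            (Metric.diam (Metric.ball x' (2*D*ρ^n)) / Metric.diam (Metric.ball x' (2*D))) := by
        field_simp
      have hsplitν : (ν (Metric.ball x' (2*D*ρ^(n+1)))).toReal / (ν (Metric.ball x' (2*D))).toReal
          = ((ν (Metric.ball x' (2*D*ρ^(n+1)))).toReal / (ν (Metric.ball x' (2*D*ρ^n))).toReal) *
            ((ν (Metric.ball x' (2*D*ρ^n))).toReal / (ν (Metric.ball x' (2*D))).toReal) := by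
        field_simp
      rw [hsplitd, hsplitν, Real.mul_rpow (le_of_lt (div_pos (hdpos (n+1)) (hdpos n)))
        (le_of_lt (div_pos (hdpos n) (by simpa using hdpos 0)))]
      have hstep := step n
      have h1 : ((Metric.diam (Metric.ball x' (2*D*ρ^(n+1))) / Metric.diam (Metric.ball x' (2*D*ρ^n))) ^ p *
            (Metric.diam (Metric.ball x' (2*D*ρ^n)) / Metric.diam (Metric.ball x' (2*D))) ^ p) *
            (((ν (Metric.ball x' (2*D*ρ^(n+1)))).toReal / (ν (Metric.ball x' (2*D*ρ^n))).toReal) *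
            ((ν (Metric.ball x' (2*D*ρ^n))).toReal / (ν (Metric.ball x' (2*D))).toReal))
          = ((Metric.diam (Metric.ball x' (2*D*ρ^(n+1))) / Metric.diam (Metric.ball x' (2*D*ρ^n))) ^ p *
            ((ν (Metric.ball x' (2*D*ρ^(n+1)))).toReal / (ν (Metric.ball x' (2*D*ρ^n))).toReal)) *
            ((Metric.diam (Metric.ball x' (2*D*ρ^n)) / Metric.diam (Metric.ball x' (2*D))) ^ p *
            ((ν (Metric.ball x' (2*D*ρ^n))).toReal / (ν (Metric.ball x' (2*D))).toReal)) := by ring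
      rw [h1]
      calc _ ≤ (δ * ((μ (Metric.ball x' (2*D*ρ^(n+1)))).toReal / (μ (Metric.ball x' (2*D*ρ^n))).toReal)) *
            (δ^n * ((μ (Metric.ball x' (2*D*ρ^n))).toReal / (μ (Metric.ball x' (2*D))).toReal)) := by
            apply mul_le_mul hstep ih
            · positivity
            · have : (0:ℝ) < δ * ((μ (Metric.ball x' (2*D*ρ^(n+1)))).toReal /
                  (μ (Metric.ball x' (2*D*ρ^n))).toReal) := by
                apply mul_pos hδ0
                exact div_pos (hμpos x' _ (hspos (n+1))) (hμpos x' _ (hspos n))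
              linarith
        _ = δ^(n+1) * (((μ (Metric.ball x' (2*D*ρ^(n+1)))).toReal / (μ (Metric.ball x' (2*D*ρ^n))).toReal) *
            ((μ (Metric.ball x' (2*D*ρ^n))).toReal / (μ (Metric.ball x' (2*D))).toReal)) := by ring
        _ = δ^(n+1) * ((μ (Metric.ball x' (2*D*ρ^(n+1)))).toReal / (μ (Metric.ball x' (2*D))).toReal) := by
            rw [div_mul_div_cancel₀]
            exact hμn
  -- choose k
  have hexists : ∃ j : ℕ, 2*D*ρ^j < r' := by
    obtain ⟨j, hj⟩ := exists_pow_lt_of_lt_one (show (0:ℝ) < r'/(2*D) by positivity) hρ1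
    refine ⟨j, ?_⟩
    have := (lt_div_iff₀ (show (0:ℝ) < 2*D by positivity)).mp hj
    nlinarith [pow_pos hρ0 j]
  set k' := Nat.find hexists with hk'def
  have hk'spec : 2*D*ρ^k' < r' := Nat.find_spec hexists
  have hk'pos : k' ≠ 0 := by
    intro h
    rw [h] at hk'spec
    simp only [pow_zero, mul_one] at hk'spec
    linarith
  set k := k' - 1 with hkdef
  have hkk' : k + 1 = k' := Nat.succ_pred_eq_of_ne_zero hk'pos
  have hk1 : r' ≤ 2*D*ρ^k := by
    have := Nat.find_min hexists (m := k) (by omega)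
    push_neg at this
    linarith
  have hk2 : 2*D*ρ^(k+1) < r' := by rw [hkk']; exact hk'spec
  -- measure comparisons
  have hcν0 : (0:ℝ) ≤ cν := by linarith
  have hcμ0 : (0:ℝ) ≤ cμ := by linarith
  have hB : (ν (Metric.ball x' r')).toReal ≤ (ν (Metric.ball x' (2*D*ρ^k))).toReal := by
    apply ENNReal.toReal_mono (hνf x' _ (hspos k)).2.ne
    exact measure_mono (Metric.ball_subset_ball hk1)
  have hC : (ν (Metric.ball x' (2*D))).toReal ≤ cν^3 * (ν (Metric.ball x R)).toReal := by
    have hsub : Metric.ball x' (2*D) ⊆ Metric.ball x (2^3 * R) := by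
      intro z hz
      rw [Metric.mem_ball] at hz ⊢
      have h1 : dist x' x < R := Metric.mem_ball.mp hx'
      calc dist z x ≤ dist z x' + dist x' x := dist_triangle z x' x
        _ < 2*D + R := by linarith
        _ ≤ 2^3 * R := by norm_num; linarith
    have h2 : ν (Metric.ball x' (2*D)) ≤ ENNReal.ofReal cν ^ 3 * ν (Metric.ball x R) :=
      le_trans (measure_mono hsub) (aux_doubling hνd x R hR 3)
    have h3 : ENNReal.ofReal cν ^ 3 * ν (Metric.ball x R) ≠ ⊤ :=
      ENNReal.mul_ne_top (by simp) (hνf x R hR).2.ne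
    calc (ν (Metric.ball x' (2*D))).toReal ≤ (ENNReal.ofReal cν ^ 3 * ν (Metric.ball x R)).toReal :=
          ENNReal.toReal_mono h3 h2
      _ = cν^3 * (ν (Metric.ball x R)).toReal := by
          rw [ENNReal.toReal_mul, ENNReal.toReal_pow, ENNReal.toReal_ofReal hcν0]
  have hDmu : (μ (Metric.ball x' (2*D*ρ^k))).toReal ≤ cμ^m * (μ (Metric.ball x' r')).toReal := by
    have hle : 2*D*ρ^k ≤ 2^m * r' := by
      have h1 : 2*D*ρ^k * ρ < r' := by
        have : 2*D*ρ^(k+1) = 2*D*ρ^k * ρ := by rw [pow_succ]; ring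
        linarith [hk2, this.symm.le]
      have h2 : 2*D*ρ^k < r' / ρ := (lt_div_iff₀ hρ0).mpr h1
      have h3 : r' / ρ = r' * (1/ρ) := by ring
      have h4 : r' * (1/ρ) ≤ r' * 2^m := mul_le_mul_of_nonneg_left hm hr'.le
      nlinarith
    have hsub : Metric.ball x' (2*D*ρ^k) ⊆ Metric.ball x' (2^m * r') :=
      Metric.ball_subset_ball hle
    have h2 : μ (Metric.ball x' (2*D*ρ^k)) ≤ ENNReal.ofReal cμ ^ m * μ (Metric.ball x' r') :=
      le_trans (measure_mono hsub) (aux_doubling hμd x' r' hr' m)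
    have h3 : ENNReal.ofReal cμ ^ m * μ (Metric.ball x' r') ≠ ⊤ :=
      ENNReal.mul_ne_top (by simp) (hμf x' r' hr').2.ne
    calc (μ (Metric.ball x' (2*D*ρ^k))).toReal
        ≤ (ENNReal.ofReal cμ ^ m * μ (Metric.ball x' r')).toReal := ENNReal.toReal_mono h3 h2
      _ = cμ^m * (μ (Metric.ball x' r')).toReal := by
          rw [ENNReal.toReal_mul, ENNReal.toReal_pow, ENNReal.toReal_ofReal hcμ0]
  have hE : (μ (Metric.ball x R)).toReal ≤ (μ (Metric.ball x' (2*D))).toReal := by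
    apply ENNReal.toReal_mono (hμf x' (2*D) (by positivity)).2.ne
    apply measure_mono
    intro z hz
    rw [Metric.mem_ball]
    calc dist z x' ≤ D := Metric.dist_le_diam_of_mem Metric.isBounded_ball hz hx'
      _ < 2*D := by linarith
  -- diameter comparisons
  have hd00 : Metric.diam (Metric.ball x' (2*D)) ≤ 4*D := by
    have := hdhigh 0; simpa using this
  have hd0pos : 0 < Metric.diam (Metric.ball x' (2*D)) := by
    have := hdpos 0; simpa using this
  have hF : ρ^k/8 ≤ Metric.diam (Metric.ball x' (2*D*ρ^k)) / Metric.diam (Metric.ball x' (2*D)) := by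
    have h1 : ρ^k/8 = (D*ρ^k/2) / (4*D) := by field_simp; ring
    rw [h1]
    exact div_le_div₀ (le_of_lt (hdpos k)) (hdlow k) hd0pos hd00
  have hdiam' : r'/2 ≤ Metric.diam (Metric.ball x' r') := by
    have h1 := aux_min_le_diam x' r' hr' (Metric.ball x R)
    rw [← hDdef, min_eq_left hr'D] at h1
    exact h1
  have ht'pos : 0 < Metric.diam (Metric.ball x' r') / D :=
    div_pos (lt_of_lt_of_le (by linarith) hdiam') hD0
  have hG : Metric.diam (Metric.ball x' r') / D ≤ 4 * ρ^k := by
    rw [div_le_iff₀ hD0]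
    calc Metric.diam (Metric.ball x' r') ≤ 2 * r' := Metric.diam_ball hr'.le
      _ ≤ 2 * (2*D*ρ^k) := by linarith
      _ = 4 * ρ^k * D := by ring
  -- assemble
  set A : ℝ := ρ^k with hAdef
  have hA0 : 0 < A := pow_pos hρ0 k
  set t : ℝ := Metric.diam (Metric.ball x' r') / D with htdef
  have hνB := hνpos x R hR
  have hμB := hμpos x R hR
  have hν' := hνpos x' r' hr'
  have hμ' := hμpos x' r' hr'
  have hν0' := hνpos x' (2*D) (by positivity)
  have hμ0' := hμpos x' (2*D) (by positivity)
  have hνk := hνpos x' (2*D*ρ^k) (hspos k)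
  have hμk := hμpos x' (2*D*ρ^k) (hspos k)
  -- key combined inequality
  have key : (A/8)^p * ((ν (Metric.ball x' r')).toReal / (cν^3 * (ν (Metric.ball x R)).toReal))
      ≤ δ^k * ((cμ^m * (μ (Metric.ball x' r')).toReal) / (μ (Metric.ball x R)).toReal) := by
    have hL : (A/8)^p * ((ν (Metric.ball x' r')).toReal / (cν^3 * (ν (Metric.ball x R)).toReal))
        ≤ (Metric.diam (Metric.ball x' (2*D*ρ^k)) / Metric.diam (Metric.ball x' (2*D))) ^ p *
          ((ν (Metric.ball x' (2*D*ρ^k))).toReal / (ν (Metric.ball x' (2*D))).toReal) := by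
      apply mul_le_mul
      · exact Real.rpow_le_rpow (by positivity) hF (by linarith)
      · exact div_le_div₀ (le_of_lt hνk) hB (by positivity) hC
      · positivity
      · positivity
    have hR' : δ^k * ((μ (Metric.ball x' (2*D*ρ^k))).toReal / (μ (Metric.ball x' (2*D))).toReal)
        ≤ δ^k * ((cμ^m * (μ (Metric.ball x' r')).toReal) / (μ (Metric.ball x R)).toReal) := by
      apply mul_le_mul_of_nonneg_left _ (by positivity)
      exact div_le_div₀ (by positivity) hDmu hμB hE
    exact le_trans hL (le_trans (chain k) hR')
  -- scalar estimate
  have hscalar : t^(p-ε) * δ^k ≤ 32^p * (A/8)^p := by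
    have h1 : t^(p-ε) ≤ (4*A)^(p-ε) := Real.rpow_le_rpow ht'pos.le hG hpε0
    have h2 : (δ:ℝ)^k ≤ A^ε := by
      have e1 : ((ρ:ℝ)^ε)^(k:ℕ) = ((ρ:ℝ)^ε)^((k:ℕ):ℝ) := (Real.rpow_natCast _ k).symm
      have e2 : ((ρ:ℝ)^ε)^((k:ℕ):ℝ) = (ρ:ℝ)^(ε*((k:ℕ):ℝ)) := (Real.rpow_mul hρ0.le ε _).symm
      have e3 : (ρ:ℝ)^(ε*((k:ℕ):ℝ)) = ((ρ:ℝ)^(((k:ℕ)):ℝ))^ε := by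
        rw [mul_comm, Real.rpow_mul hρ0.le]
      have e4 : ((ρ:ℝ)^(((k:ℕ)):ℝ))^ε = A^ε := by rw [Real.rpow_natCast ρ k, hAdef]
      calc (δ:ℝ)^k ≤ (ρ^ε)^k := pow_le_pow_left₀ hδ0.le hδρε k
        _ = A^ε := by rw [e1, e2, e3, e4]
    calc t^(p-ε) * δ^k ≤ (4*A)^(p-ε) * A^ε := by
          apply mul_le_mul h1 h2 (by positivity) (by positivity)
      _ = 4^(p-ε) * A^(p-ε) * A^ε := by rw [Real.mul_rpow (by norm_num) hA0.le]
      _ = 4^(p-ε) * A^p := by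
          rw [mul_assoc, ← Real.rpow_add hA0]
          ring_nf
      _ ≤ 4^p * A^p := by
          apply mul_le_mul_of_nonneg_right _ (by positivity)
          exact Real.rpow_le_rpow_of_exponent_le (by norm_num) (by linarith)
      _ = 32^p * (A/8)^p := by
          rw [← Real.mul_rpow (by norm_num : (0:ℝ) ≤ 32) (by positivity : (0:ℝ) ≤ A/8),
              ← Real.mul_rpow (by norm_num : (0:ℝ) ≤ 4) hA0.le]
          congr 1
          ring
  -- final computation
  have hA8p : (0:ℝ) < (A/8)^p := Real.rpow_pos_of_pos (by positivity) p
  have expand : t^(p-ε) * ((ν (Metric.ball x' r')).toReal / (ν (Metric.ball x R)).toReal)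
      = (t^(p-ε) * cν^3 / (A/8)^p) *
        ((A/8)^p * ((ν (Metric.ball x' r')).toReal / (cν^3 * (ν (Metric.ball x R)).toReal))) := by
    field_simp
  rw [expand]
  calc (t^(p-ε) * cν^3 / (A/8)^p) *
        ((A/8)^p * ((ν (Metric.ball x' r')).toReal / (cν^3 * (ν (Metric.ball x R)).toReal)))
      ≤ (t^(p-ε) * cν^3 / (A/8)^p) *
        (δ^k * ((cμ^m * (μ (Metric.ball x' r')).toReal) / (μ (Metric.ball x R)).toReal)) := by
        apply mul_le_mul_of_nonneg_left key
        positivity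
    _ = (t^(p-ε) * δ^k / (A/8)^p) * (cν^3 * cμ^m *
        ((μ (Metric.ball x' r')).toReal / (μ (Metric.ball x R)).toReal)) := by
        field_simp
    _ ≤ 32^p * (cν^3 * cμ^m *
        ((μ (Metric.ball x' r')).toReal / (μ (Metric.ball x R)).toReal)) := by
        apply mul_le_mul_of_nonneg_right _ (by positivity)
        rw [div_le_iff₀ hA8p]
        exact hscalar
    _ = 32^p * cν^3 * cμ^m * ((μ (Metric.ball x' r')).toReal / (μ (Metric.ball x R)).toReal) := by
        ring
end
end

section
/- Let 1 ≤ q, p < ∞. Suppose X = (X,d,ν,μ) is a connected metric two-measure space and there is a constant C₁ > 0 such that (⨍_B |u − u_{B;ν}|^q dν)^{1/q} ≤ C₁ diam(B) ((1/μ(B)) ∫_X g^p dμ)^{1/p} holds whenever B is a ball in X, u : X → ℝ is a Lipschitz function with bounded support, and g is a p-weak upper gradient of u. Then X satisfies a (q,p)-balance condition, with constant depending only on q, p, the doubling constants of ν and μ, and C₁. -/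
open MeasureTheory Metric Set ENNReal NNReal

noncomputable section

/-- A (rectifiable, arc-length parametrized) curve in `X`: a `1`-Lipschitz map
from `[0, len]` to `X` with `len > 0`. -/
structure Curve (X : Type*) [MetricSpace X] where
  len : ℝ
  len_pos : 0 < len
  toFun : ℝ → X
  speed : ∀ s ∈ Set.Icc (0 : ℝ) len, ∀ t ∈ Set.Icc (0 : ℝ) len,
    dist (toFun s) (toFun t) ≤ |s - t|

/-- The curve integral `∫_γ g ds` for an arc-length parametrized curve. -/
def curveLint {X : Type*} [MetricSpace X] (γ : Curve X) (g : X → ℝ≥0∞) : ℝ≥0∞ :=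
  ∫⁻ t in Set.Icc (0 : ℝ) γ.len, g (γ.toFun t)

/-- `g` is a `p`-weak upper gradient of `u` (w.r.t. the measure `μ`): the upper
gradient inequality `|u(γ(0)) - u(γ(ℓ_γ))| ≤ ∫_γ g ds` holds for `p`-almost every
curve, i.e. there is a Borel `ρ ∈ L^p_loc(X; dμ)` such that `∫_γ ρ ds = ∞` for every
exceptional curve. -/
def IsWeakUpperGradient {X : Type*} [MetricSpace X] [MeasurableSpace X]
    (μ : Measure X) (p : ℝ) (u : X → ℝ) (g : X → ℝ≥0∞) : Prop :=
  Measurable g ∧ ∃ ρ : X → ℝ≥0∞, Measurable ρ ∧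
    (∀ (x : X) (r : ℝ), 0 < r → ∫⁻ y in Metric.ball x r, ρ y ^ p ∂μ < ⊤) ∧
    ∀ γ : Curve X, curveLint γ ρ ≠ ⊤ →
      ENNReal.ofReal |u (γ.toFun 0) - u (γ.toFun γ.len)| ≤ curveLint γ g

/-! Test the Poincaré inequality on the double ball `2B` against the tent function
`u = (1 - d(·, x') / r')₊` over `B' = B(x', r')`. Since `(1 / r') 1_{2B'}` is an upper gradient
of `u`, the right-hand side is at most `C₁ diam(2B) / r' · (μ(2B') / μ(2B))^{1/p}`. Whatever the
mean of `u` on `2B`, `u` stays `1/16` away from it on a ball of radius `r' / 16` inside `2B`,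
centred either at `x'` or at a point at distance `r' / 4` from `x'`; such a point exists because
`X` is connected and `diam B ≥ r'`. By doubling, that ball carries a fixed fraction of `ν(B')`,
which bounds the left-hand side below by a multiple of `(ν(B') / ν(B))^{1/q}`. Connectedness also
gives `diam(2B) ≤ 4 diam B`, and `diam B' ≤ 2r'` then yields the balance condition. -/

variable {X : Type*} [MetricSpace X]

lemma IsDoubling.measure_ball_two_pow_mul_le [MeasurableSpace X] {ν : Measure X} {c : ℝ}
    (h : IsDoubling ν c) (k : ℕ) (x : X) {r : ℝ} (hr : 0 < r) :
    ν (ball x (2 ^ k * r)) ≤ ENNReal.ofReal c ^ k * ν (ball x r) := by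
  induction k generalizing r with
  | zero => simp
  | succ k ih =>
    calc ν (ball x (2 ^ (k + 1) * r)) = ν (ball x (2 ^ k * (2 * r))) := by ring_nf
      _ ≤ ENNReal.ofReal c ^ k * ν (ball x (2 * r)) := ih (by positivity)
      _ ≤ ENNReal.ofReal c ^ k * (ENNReal.ofReal c * ν (ball x r)) := by gcongr; exact h x r hr
      _ = ENNReal.ofReal c ^ (k + 1) * ν (ball x r) := by ring

section Connected

variable [PreconnectedSpace X]

lemma exists_dist_eq_of_le_dist (x w : X) {s : ℝ} (hs : 0 ≤ s) (hsw : s ≤ dist w x) :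
    ∃ y, dist y x = s :=
  intermediate_value_univ x w (continuous_id.dist continuous_const) ⟨by simpa using hs, hsw⟩

lemma exists_dist_eq_of_two_mul_lt_diam {S : Set X} (x : X) {s : ℝ} (hs : 0 ≤ s)
    (hS : 2 * s < diam S) : ∃ y, dist y x = s := by
  obtain ⟨w, hw⟩ : ∃ w, s ≤ dist w x := by
    by_contra! h
    have hsub : S ⊆ closedBall x s := fun w _ => (h w).le
    linarith [diam_mono hsub isBounded_closedBall, diam_closedBall (x := x) hs]
  exact exists_dist_eq_of_le_dist x w hs hw

lemma le_diam_ball_of_ne_univ {x : X} {R : ℝ} (h : ball x R ≠ univ) : R ≤ diam (ball x R) := by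
  obtain ⟨w, hw⟩ := (ne_univ_iff_exists_notMem _).1 h
  by_contra! hlt
  have hD : 0 ≤ diam (ball x R) := diam_nonneg
  obtain ⟨y, hy⟩ := exists_dist_eq_of_le_dist x w (s := (diam (ball x R) + R) / 2)
    (by linarith) (by linarith [not_lt.1 (mt mem_ball.2 hw)])
  have hyx := dist_le_diam_of_mem isBounded_ball (mem_ball.2 (by linarith : dist y x < R))
    (mem_ball_self (by linarith : 0 < R))
  linarith

lemma diam_ball_two_mul_le (x : X) {R : ℝ} (hR : 0 ≤ R) :
    diam (ball x (2 * R)) ≤ 4 * diam (ball x R) := by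
  by_cases h : ball x R = univ
  · have h2 : ball x (2 * R) = univ := eq_univ_of_univ_subset (h ▸ ball_subset_ball (by linarith))
    rw [h2, ← h]
    linarith [diam_nonneg (s := ball x R)]
  · linarith [diam_ball (x := x) (by linarith : 0 ≤ 2 * R), le_diam_ball_of_ne_univ h]

end Connected

lemma mul_ofReal_sub_le_curveLint (γ : Curve X) {g : X → ℝ≥0∞} {c d : ℝ} (hc : 0 ≤ c)
    (hd : d ≤ γ.len) {v : ℝ≥0∞} (hv : ∀ t ∈ Icc c d, v ≤ g (γ.toFun t)) :
    v * ENNReal.ofReal (d - c) ≤ curveLint γ g :=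
  calc v * ENNReal.ofReal (d - c) = ∫⁻ _ in Icc c d, v := by
        rw [setLIntegral_const, Real.volume_Icc]
    _ ≤ ∫⁻ t in Icc c d, g (γ.toFun t) := setLIntegral_mono' measurableSet_Icc hv
    _ ≤ curveLint γ g := lintegral_mono_set (Icc_subset_Icc hc hd)

lemma isWeakUpperGradient_of_forall_curve [MeasurableSpace X] (μ : Measure X) {p : ℝ}
    (hp : 0 < p) {u : X → ℝ} {g : X → ℝ≥0∞} (hg : Measurable g)
    (h : ∀ γ : Curve X, ENNReal.ofReal |u (γ.toFun 0) - u (γ.toFun γ.len)| ≤ curveLint γ g) :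
    IsWeakUpperGradient μ p u g :=
  ⟨hg, 0, measurable_const, fun _ _ _ => by simp [ENNReal.zero_rpow_of_pos hp], fun γ _ => h γ⟩

lemma ofReal_abs_sub_le_curveLint_indicator {u : X → ℝ} {x : X} {r : ℝ} (hr : 0 < r)
    (hlip : ∀ a b, |u a - u b| ≤ dist a b / r) (hosc : ∀ a b, |u a - u b| ≤ 1)
    (hsupp : ∀ y, r ≤ dist y x → u y = 0) (γ : Curve X) :
    ENNReal.ofReal |u (γ.toFun 0) - u (γ.toFun γ.len)|
      ≤ curveLint γ ((ball x (2 * r)).indicator fun _ => ENNReal.ofReal (1 / r)) := by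
  have hℓ := γ.len_pos
  have h0 : (0 : ℝ) ∈ Icc 0 γ.len := left_mem_Icc.2 hℓ.le
  have hℓ' : γ.len ∈ Icc 0 γ.len := right_mem_Icc.2 hℓ.le
  set s := min γ.len r with hs
  have hs_le : s ≤ γ.len := min_le_left _ _
  have hs_pos : 0 < s := lt_min hℓ hr
  have hdiff : |u (γ.toFun 0) - u (γ.toFun γ.len)| ≤ s / r := by
    rw [hs, ← min_div_div_right hr.le, div_self hr.ne']
    refine le_min ((hlip _ _).trans ?_) (hosc _ _)
    have := γ.speed 0 h0 γ.len hℓ'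
    rw [zero_sub, abs_neg, abs_of_pos hℓ] at this
    gcongr
  -- once an endpoint lies in `ball x r`, the curve stays in `ball x (2 * r)` for a time `s`
  have hnear : ∀ t₀ ∈ Icc 0 γ.len, dist (γ.toFun t₀) x < r → ∀ c, 0 ≤ c → c + s ≤ γ.len →
      t₀ ∈ Icc c (c + s) →
      ENNReal.ofReal |u (γ.toFun 0) - u (γ.toFun γ.len)|
        ≤ curveLint γ ((ball x (2 * r)).indicator fun _ => ENNReal.ofReal (1 / r)) := by
    intro t₀ ht₀ hx c hc hcs htc
    refine (ENNReal.ofReal_le_ofReal hdiff).trans ?_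
    calc ENNReal.ofReal (s / r) = ENNReal.ofReal (1 / r) * ENNReal.ofReal (c + s - c) := by
          rw [← ENNReal.ofReal_mul (by positivity)]; ring_nf
      _ ≤ _ := mul_ofReal_sub_le_curveLint γ hc hcs fun t ht => ?_
    have htI : t ∈ Icc 0 γ.len := ⟨hc.trans ht.1, ht.2.trans hcs⟩
    have hγ := γ.speed t htI t₀ ht₀
    have hts : |t - t₀| ≤ s :=
      abs_sub_le_iff.2 ⟨by linarith [ht.2, htc.1], by linarith [ht.1, htc.2]⟩
    rw [indicator_of_mem (mem_ball.2 ?_)]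
    linarith [dist_triangle (γ.toFun t) (γ.toFun t₀) x, min_le_right γ.len r]
  rcases lt_or_ge (dist (γ.toFun 0) x) r with h₀ | h₀
  · exact hnear 0 h0 h₀ 0 le_rfl (by linarith) ⟨le_rfl, by linarith⟩
  rcases lt_or_ge (dist (γ.toFun γ.len) x) r with hₗ | hₗ
  · exact hnear γ.len hℓ' hₗ (γ.len - s) (by linarith) (by linarith) ⟨by linarith, by linarith⟩
  simp [hsupp _ h₀, hsupp _ hₗ]

def tent (x : X) (r : ℝ) (y : X) : ℝ := max 0 (1 - dist y x / r)

section Tent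

variable {x : X} {r : ℝ}

lemma tent_nonneg (y : X) : 0 ≤ tent x r y := le_max_left _ _

lemma tent_le_one (hr : 0 < r) (y : X) : tent x r y ≤ 1 :=
  max_le zero_le_one (by linarith [div_nonneg dist_nonneg hr.le (a := dist y x)])

lemma tent_eq_zero (hr : 0 < r) {y : X} (hy : r ≤ dist y x) : tent x r y = 0 :=
  max_eq_left (by rw [sub_nonpos, le_div_iff₀ hr]; linarith)

lemma abs_tent_sub_le (hr : 0 < r) (a b : X) : |tent x r a - tent x r b| ≤ dist a b / r := by
  calc |tent x r a - tent x r b| ≤ |(1 - dist a x / r) - (1 - dist b x / r)| := by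
        simpa only [tent, max_comm (0 : ℝ)] using abs_max_sub_max_le_abs _ _ _
    _ = |dist b x - dist a x| / r := by
        rw [show (1 - dist a x / r) - (1 - dist b x / r) = (dist b x - dist a x) / r by ring,
          abs_div, abs_of_pos hr]
    _ ≤ dist a b / r := by gcongr; simpa [dist_comm a b] using abs_dist_sub_le b a x

lemma abs_tent_sub_le_one (hr : 0 < r) (a b : X) : |tent x r a - tent x r b| ≤ 1 :=
  abs_sub_le_iff.2 ⟨by linarith [tent_le_one (x := x) hr a, tent_nonneg (x := x) (r := r) b],
    by linarith [tent_le_one (x := x) hr b, tent_nonneg (x := x) (r := r) a]⟩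

lemma lipschitzWith_tent (hr : 0 < r) : LipschitzWith (Real.toNNReal (1 / r)) (tent x r) :=
  LipschitzWith.of_dist_le_mul fun a b => by
    rw [Real.dist_eq, Real.coe_toNNReal _ (by positivity), one_div_mul_eq_div]
    exact abs_tent_sub_le hr a b

lemma isBounded_support_tent (hr : 0 < r) : Bornology.IsBounded (Function.support (tent x r)) :=
  isBounded_ball.subset fun _ hy => mem_ball.2 <| not_le.1 fun h => hy (tent_eq_zero hr h)

lemma isWeakUpperGradient_tent [MeasurableSpace X] [OpensMeasurableSpace X] (μ : Measure X)
    {p : ℝ} (hp : 0 < p) (hr : 0 < r) :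
    IsWeakUpperGradient μ p (tent x r)
      ((ball x (2 * r)).indicator fun _ => ENNReal.ofReal (1 / r)) :=
  isWeakUpperGradient_of_forall_curve μ hp (measurable_const.indicator measurableSet_ball)
    (ofReal_abs_sub_le_curveLint_indicator hr (abs_tent_sub_le hr) (abs_tent_sub_le_one hr)
      fun _ => tent_eq_zero hr)

/-- The centre `x` works when `a ≤ 7/8`, and `z` otherwise. -/
lemma exists_ball_le_abs_tent_sub (hr : 0 < r) {z : X} (hz : dist z x = r / 4) (a : ℝ) :
    ∃ y, dist y x ≤ r / 4 ∧ ∀ w ∈ ball y (r / 16), 1 / 16 ≤ |tent x r w - a| := by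
  rcases le_or_gt a (7 / 8) with ha | ha
  · refine ⟨x, by rw [dist_self]; positivity, fun w hw => le_abs.2 (Or.inl ?_)⟩
    have : dist w x / r < 1 / 16 := by rw [div_lt_iff₀ hr]; linarith [mem_ball.1 hw]
    have : 1 - dist w x / r ≤ tent x r w := le_max_right _ _
    linarith
  · refine ⟨z, hz.le, fun w hw => le_abs.2 (Or.inr ?_)⟩
    have hwx : 3 / 16 * r ≤ dist w x := by
      linarith [mem_ball.1 hw, dist_triangle z w x, dist_comm w z]
    have : tent x r w ≤ 13 / 16 := max_le (by norm_num) (by linarith [(le_div_iff₀ hr).2 hwx])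
    linarith

end Tent

lemma rpow_one_div_le_mul_rpow_one_div_of_le {a b K : ℝ≥0∞} {q : ℝ} (hq : 1 ≤ q) (hK : 1 ≤ K)
    (h : a ≤ K * b) : a ^ (1 / q) ≤ K * b ^ (1 / q) :=
  calc a ^ (1 / q) ≤ (K * b) ^ (1 / q) := by gcongr
    _ = K ^ (1 / q) * b ^ (1 / q) := ENNReal.mul_rpow_of_nonneg _ _ (by positivity)
    _ ≤ K ^ (1 : ℝ) * b ^ (1 / q) := by
        gcongr
        exact (div_le_one (by positivity)).2 hq
    _ = K * b ^ (1 / q) := by rw [ENNReal.rpow_one]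

lemma lintegral_indicator_const_rpow {α : Type*} [MeasurableSpace α] {s : Set α}
    (hs : MeasurableSet s) (μ : Measure α) (v : ℝ≥0∞) {p : ℝ} (hp : 0 < p) :
    ∫⁻ y, s.indicator (fun _ => v) y ^ p ∂μ = v ^ p * μ s := by
  have : (fun y => s.indicator (fun _ => v) y ^ p) = s.indicator fun _ => v ^ p := by
    ext y
    by_cases hy : y ∈ s <;> simp [hy, ENNReal.zero_rpow_of_pos hp]
  rw [this, lintegral_indicator_const hs]

section Measure

variable [MeasurableSpace X] [OpensMeasurableSpace X]

lemma ofReal_rpow_mul_measure_ball_le_lintegral_tent {ν : Measure X} {c : ℝ} (hν : IsDoubling ν c)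
    {x x' z : X} {R r q : ℝ} (hq : 0 ≤ q) (hr : 0 < r) (hx' : dist x' x < R) (hrR : r ≤ 2 * R)
    (hz : dist z x' = r / 4) (a : ℝ) :
    ENNReal.ofReal (1 / 16) ^ q * ν (ball x' r)
      ≤ ENNReal.ofReal c ^ 5 * ∫⁻ w in ball x (2 * R), ENNReal.ofReal |tent x' r w - a| ^ q ∂ν := by
  obtain ⟨y, hyx', hy⟩ := exists_ball_le_abs_tent_sub hr hz a
  have hsub : ball y (r / 16) ⊆ ball x (2 * R) := fun w hw => mem_ball.2 <| by
    linarith [dist_triangle4 w y x' x, mem_ball.1 hw]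
  have hcover : ball x' r ⊆ ball y (2 ^ 5 * (r / 16)) :=
    ball_subset_ball' (by linarith [dist_comm x' y])
  calc ENNReal.ofReal (1 / 16) ^ q * ν (ball x' r)
      ≤ ENNReal.ofReal (1 / 16) ^ q * (ENNReal.ofReal c ^ 5 * ν (ball y (r / 16))) := by
        gcongr
        exact (measure_mono hcover).trans (hν.measure_ball_two_pow_mul_le 5 y (by positivity))
    _ = ENNReal.ofReal c ^ 5 * ∫⁻ _ in ball y (r / 16), ENNReal.ofReal (1 / 16) ^ q ∂ν := by
        rw [setLIntegral_const]; ring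
    _ ≤ ENNReal.ofReal c ^ 5 *
          ∫⁻ w in ball y (r / 16), ENNReal.ofReal |tent x' r w - a| ^ q ∂ν := by
        refine mul_le_mul_right (setLIntegral_mono' measurableSet_ball fun w hw => ?_) _
        exact ENNReal.rpow_le_rpow (ENNReal.ofReal_le_ofReal (hy w hw)) hq
    _ ≤ _ := mul_le_mul_right (lintegral_mono_set hsub) _

lemma ofReal_mul_rpow_le_oscillation_tent {ν : Measure X} {c : ℝ} (hν : IsDoubling ν c)
    (hc : 1 ≤ c) {x x' z : X} {R r q : ℝ} (hq : 1 ≤ q) (hR : 0 < R) (hr : 0 < r)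
    (hx' : dist x' x < R) (hrR : r ≤ 2 * R) (hz : dist z x' = r / 4)
    (h0 : ν (ball x (2 * R)) ≠ 0) (htop : ν (ball x (2 * R)) ≠ ⊤) (a : ℝ) :
    ENNReal.ofReal (1 / 16) * (ν (ball x' r) / ν (ball x R)) ^ (1 / q)
      ≤ ENNReal.ofReal c ^ 6 * ((ν (ball x (2 * R)))⁻¹ *
          ∫⁻ w in ball x (2 * R), ENNReal.ofReal |tent x' r w - a| ^ q ∂ν) ^ (1 / q) := by
  set I := ∫⁻ w in ball x (2 * R), ENNReal.ofReal |tent x' r w - a| ^ q ∂ν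
  have key : ENNReal.ofReal (1 / 16) ^ q * (ν (ball x' r) / ν (ball x R))
      ≤ ENNReal.ofReal c ^ 6 * ((ν (ball x (2 * R)))⁻¹ * I) := by
    rw [← mul_div_assoc]
    refine ENNReal.div_le_of_le_mul ?_
    calc ENNReal.ofReal (1 / 16) ^ q * ν (ball x' r) ≤ ENNReal.ofReal c ^ 5 * I :=
          ofReal_rpow_mul_measure_ball_le_lintegral_tent hν (by positivity) hr hx' hrR hz a
      _ = ENNReal.ofReal c ^ 5 * (ν (ball x (2 * R)) * (ν (ball x (2 * R)))⁻¹ * I) := by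
          rw [ENNReal.mul_inv_cancel h0 htop, one_mul]
      _ ≤ ENNReal.ofReal c ^ 5 *
            (ENNReal.ofReal c * ν (ball x R) * (ν (ball x (2 * R)))⁻¹ * I) := by
          gcongr; exact hν x R hR
      _ = _ := by ring
  calc ENNReal.ofReal (1 / 16) * (ν (ball x' r) / ν (ball x R)) ^ (1 / q)
      = (ENNReal.ofReal (1 / 16) ^ q * (ν (ball x' r) / ν (ball x R))) ^ (1 / q) := by
        rw [ENNReal.mul_rpow_of_nonneg _ _ (by positivity), ← ENNReal.rpow_mul,
          mul_one_div_cancel (by positivity), ENNReal.rpow_one]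
    _ ≤ _ :=
        rpow_one_div_le_mul_rpow_one_div_of_le hq (one_le_pow₀ (ENNReal.one_le_ofReal.2 hc)) key

lemma ofReal_mul_rpow_lintegral_indicator_le [PreconnectedSpace X] {μ : Measure X} {c : ℝ}
    (hμ : IsDoubling μ c) (hc : 1 ≤ c) {p C₁ : ℝ} (hp : 1 ≤ p) (hC₁ : 0 ≤ C₁) {x x' : X}
    {R r : ℝ} (hR : 0 < R) (hr : 0 < r) :
    ENNReal.ofReal (C₁ * diam (ball x (2 * R))) * ((μ (ball x (2 * R)))⁻¹ *
        ∫⁻ y, (ball x' (2 * r)).indicator (fun _ => ENNReal.ofReal (1 / r)) y ^ p ∂μ) ^ (1 / p)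
      ≤ ENNReal.ofReal c * ENNReal.ofReal (4 * C₁ * diam (ball x R) / r) *
          (μ (ball x' r) / μ (ball x R)) ^ (1 / p) := by
  have hint : (μ (ball x (2 * R)))⁻¹ *
        ∫⁻ y, (ball x' (2 * r)).indicator (fun _ => ENNReal.ofReal (1 / r)) y ^ p ∂μ
      ≤ ENNReal.ofReal c * (ENNReal.ofReal (1 / r) ^ p * (μ (ball x' r) / μ (ball x R))) := by
    rw [lintegral_indicator_const_rpow measurableSet_ball μ _ (by positivity)]
    calc (μ (ball x (2 * R)))⁻¹ * (ENNReal.ofReal (1 / r) ^ p * μ (ball x' (2 * r)))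
        ≤ (μ (ball x R))⁻¹ * (ENNReal.ofReal (1 / r) ^ p * (ENNReal.ofReal c * μ (ball x' r))) := by
          gcongr
          · linarith
          · exact hμ x' r hr
      _ = _ := by rw [ENNReal.div_eq_inv_mul]; ring
  have hdiam : ENNReal.ofReal (C₁ * diam (ball x (2 * R)))
      ≤ ENNReal.ofReal (4 * C₁ * diam (ball x R)) := by
    refine ENNReal.ofReal_le_ofReal ?_
    nlinarith [diam_ball_two_mul_le x hR.le]
  calc _ ≤ ENNReal.ofReal (4 * C₁ * diam (ball x R)) * (ENNReal.ofReal c *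
          (ENNReal.ofReal (1 / r) ^ p * (μ (ball x' r) / μ (ball x R))) ^ (1 / p)) :=
        mul_le_mul' hdiam
          (rpow_one_div_le_mul_rpow_one_div_of_le hp (ENNReal.one_le_ofReal.2 hc) hint)
    _ = _ := by
        have hsplit : ENNReal.ofReal (4 * C₁ * diam (ball x R) / r)
            = ENNReal.ofReal (4 * C₁ * diam (ball x R)) * ENNReal.ofReal (1 / r) := by
          rw [← ENNReal.ofReal_mul (by positivity), mul_one_div]
        rw [ENNReal.mul_rpow_of_nonneg _ _ (by positivity), ← ENNReal.rpow_mul,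
          mul_one_div_cancel (by positivity), ENNReal.rpow_one, hsplit]
        ring

end Measure

def PoincareIneq [MeasurableSpace X] (ν μ : Measure X) (q p C₁ : ℝ) : Prop :=
  ∀ (x : X) (r : ℝ), 0 < r → ∀ u : X → ℝ, (∃ L : ℝ≥0, LipschitzWith L u) →
    Bornology.IsBounded (Function.support u) →
    ∀ g : X → ℝ≥0∞, IsWeakUpperGradient μ p u g →
    ((ν (Metric.ball x r))⁻¹ *
        ∫⁻ y in Metric.ball x r,
          ENNReal.ofReal |u y - ⨍ z in Metric.ball x r, u z ∂ν| ^ q ∂ν) ^ (1 / q)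
      ≤ ENNReal.ofReal (C₁ * Metric.diam (Metric.ball x r)) *
        ((μ (Metric.ball x r))⁻¹ * ∫⁻ y, g y ^ p ∂μ) ^ (1 / p)

lemma PoincareIneq.balance_ball [MeasurableSpace X] [OpensMeasurableSpace X] [PreconnectedSpace X]
    {ν μ : Measure X} {q p cν cμ C₁ : ℝ} (hPI : PoincareIneq ν μ q p C₁) (hq : 1 ≤ q) (hp : 1 ≤ p)
    (hcν : 1 ≤ cν) (hcμ : 1 ≤ cμ) (hC₁ : 0 ≤ C₁) (hν : FinitePosOnBalls ν)
    (hμ : FinitePosOnBalls μ) (hνd : IsDoubling ν cν) (hμd : IsDoubling μ cμ) {x x' : X}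
    {R r : ℝ} (hR : 0 < R) (hx' : x' ∈ ball x R) (hr : 0 < r) (hrD : r ≤ diam (ball x R)) :
    diam (ball x' r) / diam (ball x R) * ((ν (ball x' r)).toReal / (ν (ball x R)).toReal) ^ (1 / q)
      ≤ 128 * C₁ * cμ * cν ^ 6 * ((μ (ball x' r)).toReal / (μ (ball x R)).toReal) ^ (1 / p) := by
  have hD : 0 < diam (ball x R) := hr.trans_le hrD
  have hrR : r ≤ 2 * R := hrD.trans (diam_ball hR.le)
  obtain ⟨z, hz⟩ := exists_dist_eq_of_two_mul_lt_diam (S := ball x R) x' (s := r / 4)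
    (by positivity) (by linarith)
  have hPIu := hPI x (2 * R) (by positivity) (tent x' r) ⟨_, lipschitzWith_tent hr⟩
    (isBounded_support_tent hr) _ (isWeakUpperGradient_tent μ (by positivity) hr)
  have hE := (ofReal_mul_rpow_le_oscillation_tent hνd hcν hq hR hr (mem_ball.1 hx') hrR hz
    (hν x (2 * R) (by positivity)).1.ne' (hν x (2 * R) (by positivity)).2.ne _).trans
    (mul_le_mul_right (hPIu.trans (ofReal_mul_rpow_lintegral_indicator_le hμd hcμ hp hC₁ hR hr)) _)
  have hfin : (μ (ball x' r) / μ (ball x R)) ^ (1 / p) ≠ ⊤ :=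
    ENNReal.rpow_ne_top_of_nonneg (by positivity)
      (ENNReal.div_ne_top (hμ x' r hr).2.ne (hμ x R hR).1.ne')
  have hreal := ENNReal.toReal_mono (by finiteness) hE
  simp only [ENNReal.toReal_mul, ENNReal.toReal_pow, ← ENNReal.toReal_rpow, ENNReal.toReal_div,
    ENNReal.toReal_ofReal (by positivity : (0 : ℝ) ≤ 1 / 16),
    ENNReal.toReal_ofReal (by positivity : 0 ≤ cν), ENNReal.toReal_ofReal (by positivity : 0 ≤ cμ),
    ENNReal.toReal_ofReal (by positivity : 0 ≤ 4 * C₁ * diam (ball x R) / r)] at hreal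
  calc _ ≤ 2 * r / diam (ball x R) * (16 * (cν ^ 6 * (cμ * (4 * C₁ * diam (ball x R) / r) *
          ((μ (ball x' r)).toReal / (μ (ball x R)).toReal) ^ (1 / p)))) := by
        gcongr
        · exact diam_ball hr.le
        · linarith
    _ = _ := by field_simp; ring

/-- if a connected metric two-measure space supports the inequality
`(⨍_B |u - u_{B;ν}|^q dν)^{1/q} ≤ C₁ diam(B) ((1/μ(B)) ∫_X g^p dμ)^{1/p}`
for all balls `B`, Lipschitz `u` with bounded support, and `p`-weak upper gradients
`g` of `u`, then it satisfies a `(q,p)`-balance condition, with constant depending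
only on `q`, `p`, the doubling constants `c_ν`, `c_μ` and `C₁`. -/
theorem stmt9 (q p cν cμ C₁ : ℝ) (hq : 1 ≤ q) (hp : 1 ≤ p)
    (hcν : 1 < cν) (hcμ : 1 < cμ) (hC₁ : 0 < C₁) :
    ∃ C : ℝ, 0 < C ∧ ∀ (X : Type) [MetricSpace X] [MeasurableSpace X] [BorelSpace X]
      (ν μ : Measure X), ConnectedSpace X →
      FinitePosOnBalls ν → FinitePosOnBalls μ →
      IsDoubling ν cν → IsDoubling μ cμ →
      (∀ (x : X) (r : ℝ), 0 < r → ∀ u : X → ℝ, (∃ L : ℝ≥0, LipschitzWith L u) →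
        Bornology.IsBounded (Function.support u) →
        ∀ g : X → ℝ≥0∞, IsWeakUpperGradient μ p u g →
        ((ν (Metric.ball x r))⁻¹ *
            ∫⁻ y in Metric.ball x r,
              ENNReal.ofReal |u y - ⨍ z in Metric.ball x r, u z ∂ν| ^ q ∂ν) ^ (1 / q)
          ≤ ENNReal.ofReal (C₁ * Metric.diam (Metric.ball x r)) *
            ((μ (Metric.ball x r))⁻¹ * ∫⁻ y, g y ^ p ∂μ) ^ (1 / p)) →
      Balance ν μ q p C := by
  refine ⟨(128 * C₁ * cμ * cν ^ 6) ^ p, by positivity, ?_⟩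
  intro X _ _ _ ν μ _ hν hμ hνd hμd hPI x R x' r hR hx' hr hrD
  have hC : ((128 * C₁ * cμ * cν ^ 6) ^ p) ^ (1 / p) = 128 * C₁ * cμ * cν ^ 6 := by
    rw [one_div, Real.rpow_rpow_inv (by positivity) (by positivity)]
  rw [hC]
  exact PoincareIneq.balance_ball hPI hq hp hcν.le hcμ.le hC₁.le hν hμ hνd hμd hR hx' hr hrD
end
end

section
/- Fix 1 < p < n in ℝⁿ, let μ be Lebesgue measure and dν(x) = |x|^{-p} dμ(x). Then for every 0 < ε ≤ p − 1, the two-measure space (ℝⁿ, euclidean metric, ν, μ) does NOT satisfy a (p−ε)-balance condition: there is no constant C > 0 such that (diam(B')/diam(B))^{p−ε} ν(B')/ν(B) ≤ C μ(B')/μ(B) for all balls B and B' = B(x',r') with x' ∈ B and 0 < r' ≤ diam(B). -/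
open MeasureTheory Metric Set ENNReal NNReal

noncomputable section

/-!
By scaling, `ν (B(0,r)) = r ^ (n - p) ν (B(0,1))` and `μ (B(0,r)) = r ^ n μ (B(0,1))`, where
`0 < ν (B(0,1)) < ∞` because `p < n`; moreover `diam B(0,r) = 2r`. Testing the `(p - ε)`-balance
condition on the concentric balls `B(0,r) ⊆ B(0,1)` therefore gives `r ^ (-ε) ≤ C` for all
`0 < r ≤ 1`, which fails as `r → 0`.
-/

lemma toReal_measure_ball_div_eq_rpow {X : Type*} [PseudoMetricSpace X] [MeasurableSpace X]
    {m : Measure X} {x : X} {a r : ℝ} (hr : 0 ≤ r)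
    (hm : m (ball x r) = ENNReal.ofReal (r ^ a) * m (ball x 1))
    (h0 : m (ball x 1) ≠ 0) (htop : m (ball x 1) ≠ ∞) :
    (m (ball x r)).toReal / (m (ball x 1)).toReal = r ^ a := by
  rw [hm, ENNReal.toReal_ofReal_mul _ _ (Real.rpow_nonneg hr a),
    mul_div_cancel_right₀ _ (ENNReal.toReal_pos h0 htop).ne']

theorem not_pBalance_of_ball_ratio {E : Type*} [NormedAddCommGroup E] [NormedSpace ℝ E]
    [Nontrivial E] [MeasurableSpace E] {ν μ : Measure E} {x : E} {a b q : ℝ} (hab : q + a < b)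
    (hν : ∀ r, 0 < r → r ≤ 1 → (ν (ball x r)).toReal / (ν (ball x 1)).toReal = r ^ a)
    (hμ : ∀ r, 0 < r → r ≤ 1 → (μ (ball x r)).toReal / (μ (ball x 1)).toReal = r ^ b)
    (C : ℝ) : ¬ PBalance ν μ q C := by
  intro hbal
  have hbound : ∀ r, 0 < r → r ≤ 1 → r ^ (q + a - b) ≤ C := by
    intro r hr hr1
    have h := hbal x 1 x r one_pos (mem_ball_self one_pos) hr
      (by rw [diam_ball_eq x zero_le_one]; linarith)
    rw [diam_ball_eq x hr.le, diam_ball_eq x zero_le_one, hν r hr hr1, hμ r hr hr1,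
      mul_div_mul_left _ _ two_ne_zero, div_one, ← Real.rpow_add hr] at h
    rwa [Real.rpow_sub hr, div_le_iff₀ (Real.rpow_pos_of_pos hr b)]
  obtain ⟨r, hrC, hr⟩ := ((tendsto_rpow_neg_nhdsGT_zero (by linarith : q + a - b < 0)).eventually
    (Filter.eventually_gt_atTop C)).and (Ioc_mem_nhdsGT one_pos) |>.exists
  exact (hbound r hr.1 hr.2).not_gt hrC

section HaarPowerWeight

variable {E : Type*} [NormedAddCommGroup E] [NormedSpace ℝ E] [FiniteDimensional ℝ E]
  [MeasurableSpace E] [BorelSpace E] (μ : Measure E) [μ.IsAddHaarMeasure]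

theorem withDensity_norm_rpow_ball (p : ℝ) {r : ℝ} (hr : 0 < r) :
    μ.withDensity (fun x => ENNReal.ofReal (‖x‖ ^ (-p))) (ball 0 r)
      = ENNReal.ofReal (r ^ ((Module.finrank ℝ E : ℝ) - p))
        * μ.withDensity (fun x => ENNReal.ofReal (‖x‖ ^ (-p))) (ball 0 1) := by
  set f : E → ℝ≥0∞ := fun x => ENNReal.ofReal (‖x‖ ^ (-p))
  have hf : Measurable f := by fun_prop
  have hpre : (r • ·) ⁻¹' ball (0 : E) r = ball 0 1 := by
    ext x
    simp [norm_smul, abs_of_pos hr, mul_lt_iff_lt_one_right hr]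
  have hhom : ∀ x : E, f (r • x) = ENNReal.ofReal (r ^ (-p)) * f x := by
    intro x
    simp only [f, norm_smul, Real.norm_eq_abs, abs_of_pos hr]
    rw [Real.mul_rpow hr.le (norm_nonneg _), ENNReal.ofReal_mul (Real.rpow_nonneg hr.le _)]
  have hrd : (0 : ℝ) < r ^ Module.finrank ℝ E := pow_pos hr _
  rw [withDensity_apply _ measurableSet_ball, withDensity_apply _ measurableSet_ball]
  -- substitute `x = r • y`, using `map (r • ·) μ = r ^ (-d) • μ`
  calc ∫⁻ x in ball 0 r, f x ∂μ
      = ENNReal.ofReal (r ^ Module.finrank ℝ E)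
          * ∫⁻ x in ball 0 r, f x ∂(Measure.map (r • ·) μ) := by
        rw [Measure.map_addHaar_smul μ hr.ne', Measure.restrict_smul, lintegral_smul_measure,
          smul_eq_mul, ← mul_assoc, ← ENNReal.ofReal_mul hrd.le, abs_of_pos (inv_pos.2 hrd),
          mul_inv_cancel₀ hrd.ne', ENNReal.ofReal_one, one_mul]
    _ = ENNReal.ofReal (r ^ Module.finrank ℝ E) * ∫⁻ x in ball 0 1, f (r • x) ∂μ := by
        rw [setLIntegral_map measurableSet_ball hf (measurable_const_smul r), hpre]
    _ = ENNReal.ofReal (r ^ ((Module.finrank ℝ E : ℝ) - p)) * ∫⁻ x in ball 0 1, f x ∂μ := by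
        simp_rw [hhom]
        rw [lintegral_const_mul _ hf, ← mul_assoc, ← ENNReal.ofReal_mul hrd.le,
          ← Real.rpow_natCast, ← Real.rpow_add hr, sub_eq_add_neg]

variable [Nontrivial E]

theorem withDensity_norm_rpow_ball_lt_top {p : ℝ} (hp : p < Module.finrank ℝ E) (r : ℝ) :
    μ.withDensity (fun x => ENNReal.ofReal (‖x‖ ^ (-p))) (ball 0 r) < ∞ := by
  rw [withDensity_apply _ measurableSet_ball]
  refine Integrable.lintegral_lt_top (integrableOn_ball_of_norm_le_rpow (C := 1)
    Module.finrank_pos hp (ae_of_all _ fun x => ?_)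
    (measurable_norm.pow_const _).aestronglyMeasurable)
  rw [one_mul, Real.norm_of_nonneg (Real.rpow_nonneg (norm_nonneg x) _)]

theorem withDensity_norm_rpow_ball_pos (p : ℝ) {r : ℝ} (hr : 0 < r) :
    0 < μ.withDensity (fun x => ENNReal.ofReal (‖x‖ ^ (-p))) (ball 0 r) := by
  rw [pos_iff_ne_zero, Ne, withDensity_apply_eq_zero' (by fun_prop)]
  intro hnull
  have hsub : ball (0 : E) r \ {0} ⊆ {x | ENNReal.ofReal (‖x‖ ^ (-p)) ≠ 0} ∩ ball 0 r :=
    fun x ⟨hxr, hx0⟩ =>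
      ⟨(ENNReal.ofReal_pos.2 (Real.rpow_pos_of_pos (norm_pos_iff.2 hx0) _)).ne', hxr⟩
  have hball := measure_mono_null hsub hnull
  rw [measure_sdiff_null (measure_singleton 0)] at hball
  exact (measure_ball_pos μ 0 hr).ne' hball

theorem not_pBalance_withDensity_norm_rpow {p q : ℝ} (hp : p < Module.finrank ℝ E) (hq : q < p)
    (C : ℝ) : ¬ PBalance (μ.withDensity fun x => ENNReal.ofReal (‖x‖ ^ (-p))) μ q C := by
  refine not_pBalance_of_ball_ratio (x := 0) (a := Module.finrank ℝ E - p)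
    (b := Module.finrank ℝ E) (by linarith) (fun r hr _ => ?_) (fun r hr _ => ?_) C
  · exact toReal_measure_ball_div_eq_rpow hr.le (withDensity_norm_rpow_ball μ p hr)
      (withDensity_norm_rpow_ball_pos μ p one_pos).ne' (withDensity_norm_rpow_ball_lt_top μ hp 1).ne
  · refine toReal_measure_ball_div_eq_rpow hr.le ?_ (measure_ball_pos μ 0 one_pos).ne'
      measure_ball_lt_top.ne
    rw [Real.rpow_natCast, Measure.addHaar_ball μ 0 hr.le]

end HaarPowerWeight

/-- in `ℝⁿ` with `1 < p < n`, `μ` Lebesgue measure and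
`dν = |x|^{-p} dμ`, for every `0 < ε ≤ p - 1` the pair `(ν,μ)` does NOT satisfy a
`(p-ε)`-balance condition. -/
theorem stmt10 (n : ℕ) (p : ℝ) (hp : 1 < p) (hpn : p < n) :
    ∀ ε : ℝ, 0 < ε → ε ≤ p - 1 →
      ¬ ∃ C : ℝ, 0 < C ∧
        PBalance
          ((volume : Measure (EuclideanSpace ℝ (Fin n))).withDensity
            fun x => ENNReal.ofReal (‖x‖ ^ (-p)))
          (volume : Measure (EuclideanSpace ℝ (Fin n)))
          (p - ε) C := by
  rintro ε hε - ⟨C, -, hbal⟩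
  have : Nonempty (Fin n) := ⟨⟨0, by exact_mod_cast (by linarith : (0 : ℝ) < n)⟩⟩
  exact not_pBalance_withDensity_norm_rpow volume (by rwa [finrank_euclideanSpace_fin])
    (by linarith) C hbal
end
end

section
/- Let 1 < p, q < ∞ and suppose the metric two-measure space X = (X,d,ν,μ) supports a maximal (q,p)-Poincaré inequality with constant c. Then there is a constant C > 0 such that (⨍_B |u − u_{B;ν}|^q dν)^{1/q} ≤ C diam(B) (⨍_{2B} g^p dμ)^{1/p} whenever B is a ball in X, u is Lipschitz on X, and g is a p-weak upper gradient of u. -/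
/-!
The ball `B = B(x,r)` belongs to the family `𝓑₀` attached to `2B`, so on `B` the sharp maximal
function of `2B` dominates the normalized oscillation of `u` over `B`. Integrating over `B` and
applying the maximal Poincaré inequality on `2B` gives `osc_B^p μ(B) ≤ c ∫_{2B} g^p dμ`, and the
doubling of `μ` trades `μ(B)` for `μ(2B)`. A ball of zero diameter is a single point, on which
the oscillation vanishes.
-/

open MeasureTheory Metric Set ENNReal NNReal

noncomputable section

/-- The normalized `L^q(ν)`-oscillation of `u` on the ball `B(z,r)`:
`((diam B)^{-q} ⨍_B |u - u_{B;ν}|^q dν)^{1/q}`, as an extended real. -/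
def ballOsc {X : Type*} [MetricSpace X] [MeasurableSpace X]
    (ν : Measure X) (q : ℝ) (u : X → ℝ) (z : X) (r : ℝ) : ℝ≥0∞ :=
  ((∫⁻ y in Metric.ball z r,
      ENNReal.ofReal |u y - ⨍ w in Metric.ball z r, u w ∂ν| ^ q ∂ν) /
    (ENNReal.ofReal (Metric.diam (Metric.ball z r) ^ q) * ν (Metric.ball z r))) ^ (1 / q)

/-- The sharp maximal function `M^{ν,q}_𝓑 u` associated with a family `𝓑` of balls
(given by center-radius pairs): the sup of normalized oscillations over balls of the
family containing the point. -/
def sharpMax {X : Type*} [MetricSpace X] [MeasurableSpace X]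
    (ν : Measure X) (q : ℝ) (𝓑 : Set (X × ℝ)) (u : X → ℝ) (x : X) : ℝ≥0∞ :=
  ⨆ b ∈ 𝓑, ⨆ _ : x ∈ Metric.ball b.1 b.2, ballOsc ν q u b.1 b.2


theorem lintegral_abs_sub_setAverage_rpow_eq_zero_of_eqOn {α : Type*} [MeasurableSpace α]
    {ν : Measure α} {s : Set α} (hs : MeasurableSet s) (hν₀ : ν s ≠ 0) (hν : ν s ≠ ⊤) {q : ℝ}
    (hq : 0 < q) {u : α → ℝ} {a : ℝ} (hu : EqOn u (fun _ ↦ a) s) :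
    ∫⁻ y in s, ENNReal.ofReal |u y - ⨍ z in s, u z ∂ν| ^ q ∂ν = 0 := by
  have havg : ⨍ z in s, u z ∂ν = a := by
    rw [setAverage_congr_fun hs (.of_forall fun y hy ↦ hu hy), setAverage_const hν₀ hν]
  rw [havg, setLIntegral_congr_fun hs (g := fun _ ↦ 0) fun y hy ↦ by
    simp [hu hy, ENNReal.zero_rpow_of_pos hq]]
  exact lintegral_zero

section MaximalPoincare

variable {X : Type*} [MetricSpace X]

theorem subsingleton_ball_of_diam_eq_zero {x : X} {r : ℝ} (hD : diam (ball x r) = 0) :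
    (ball x r).Subsingleton := by
  rw [← ediam_eq_zero_iff]
  exact (ENNReal.toReal_eq_zero_iff _).mp hD |>.resolve_right isBounded_ball.ediam_ne_top

/-- The family `𝓑₀ = {B(x,r) : B(x,2r) ⊆ B₀}` attached to the ball `B₀ = B(x₀,r₀)`. -/
def ballFamily (x₀ : X) (r₀ : ℝ) : Set (X × ℝ) :=
  {b | 0 < b.2 ∧ ball b.1 (2 * b.2) ⊆ ball x₀ r₀}

theorem mem_ballFamily_two_mul {x : X} {r : ℝ} (hr : 0 < r) : (x, r) ∈ ballFamily x (2 * r) :=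
  ⟨hr, subset_rfl⟩

variable [MeasurableSpace X]

def SupportsMaximalPoincare (ν μ : Measure X) (q p c : ℝ) : Prop :=
  ∀ (x₀ : X) (r₀ : ℝ), 0 < r₀ →
    ∀ u : X → ℝ, (∃ L : ℝ≥0, LipschitzWith L u) →
    ∀ g : X → ℝ≥0∞, IsWeakUpperGradient μ p u g →
    ∫⁻ x in ball x₀ r₀, sharpMax ν q (ballFamily x₀ r₀) u x ^ p ∂μ
      ≤ ENNReal.ofReal c * ∫⁻ x in ball x₀ r₀, g x ^ p ∂μ

theorem ballOsc_le_sharpMax (ν : Measure X) (q : ℝ) (u : X → ℝ) {𝓑 : Set (X × ℝ)}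
    {b : X × ℝ} (hb : b ∈ 𝓑) {y : X} (hy : y ∈ ball b.1 b.2) :
    ballOsc ν q u b.1 b.2 ≤ sharpMax ν q 𝓑 u y :=
  le_iSup₂_of_le b hb (le_iSup_of_le hy le_rfl)

theorem IsDoubling.inv_measure_ball_le {μ : Measure X} {c : ℝ} (hμ : IsDoubling μ c)
    (hc : 0 < c) (x : X) {r : ℝ} (hr : 0 < r) :
    (μ (ball x r))⁻¹ ≤ ENNReal.ofReal c * (μ (ball x (2 * r)))⁻¹ := by
  have hc' : ENNReal.ofReal c ≠ 0 := ENNReal.ofReal_ne_zero_iff.mpr hc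
  calc (μ (ball x r))⁻¹
      = ENNReal.ofReal c * (ENNReal.ofReal c * μ (ball x r))⁻¹ := by
        rw [ENNReal.mul_inv (.inl hc') (.inl ENNReal.ofReal_ne_top), ← mul_assoc,
          ENNReal.mul_inv_cancel hc' ENNReal.ofReal_ne_top, one_mul]
    _ ≤ ENNReal.ofReal c * (μ (ball x (2 * r)))⁻¹ := by
        gcongr
        exact hμ x r hr

theorem ofReal_diam_mul_ballOsc (ν : Measure X) {q : ℝ} (hq : 0 < q) (u : X → ℝ) {x : X}
    {r : ℝ} (hD : 0 < diam (ball x r)) :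
    ENNReal.ofReal (diam (ball x r)) * ballOsc ν q u x r =
      ((ν (ball x r))⁻¹ *
        ∫⁻ y in ball x r, ENNReal.ofReal |u y - ⨍ z in ball x r, u z ∂ν| ^ q ∂ν) ^ (1 / q) := by
  set I := ∫⁻ y in ball x r, ENNReal.ofReal |u y - ⨍ z in ball x r, u z ∂ν| ^ q ∂ν
  set D := ENNReal.ofReal (diam (ball x r))
  have hD₀ : D ≠ 0 := ENNReal.ofReal_ne_zero_iff.mpr hD
  have hDq : ENNReal.ofReal (diam (ball x r) ^ q) = D ^ q :=
    (ENNReal.ofReal_rpow_of_pos hD).symm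
  have hDq₀ : D ^ q ≠ 0 := (ENNReal.rpow_pos (pos_iff_ne_zero.mpr hD₀) ENNReal.ofReal_ne_top).ne'
  rw [ballOsc, hDq, div_eq_mul_inv, ENNReal.mul_inv (.inl hDq₀) (.inl (by simp [D, hq.le])),
    ← ENNReal.rpow_neg, mul_left_comm, ENNReal.mul_rpow_of_nonneg _ _ (by positivity),
    ← ENNReal.rpow_mul, neg_mul, mul_one_div_cancel hq.ne', ← mul_assoc,
    ENNReal.rpow_neg_one, ENNReal.mul_inv_cancel hD₀ ENNReal.ofReal_ne_top, one_mul, mul_comm]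


variable [OpensMeasurableSpace X] {ν μ : Measure X} {q p c : ℝ}

theorem SupportsMaximalPoincare.ballOsc_rpow_mul_measure_le
    (hmax : SupportsMaximalPoincare ν μ q p c) (hp : 0 ≤ p) {x : X} {r : ℝ} (hr : 0 < r)
    {u : X → ℝ} (hu : ∃ L : ℝ≥0, LipschitzWith L u) {g : X → ℝ≥0∞}
    (hg : IsWeakUpperGradient μ p u g) :
    ballOsc ν q u x r ^ p * μ (ball x r) ≤
      ENNReal.ofReal c * ∫⁻ y in ball x (2 * r), g y ^ p ∂μ :=
  calc ballOsc ν q u x r ^ p * μ (ball x r)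
      = ∫⁻ _ in ball x r, ballOsc ν q u x r ^ p ∂μ := (setLIntegral_const _ _).symm
    _ ≤ ∫⁻ y in ball x r, sharpMax ν q (ballFamily x (2 * r)) u y ^ p ∂μ :=
        setLIntegral_mono' measurableSet_ball fun y hy ↦ by
          gcongr
          exact ballOsc_le_sharpMax ν q u (mem_ballFamily_two_mul hr) hy
    _ ≤ ∫⁻ y in ball x (2 * r), sharpMax ν q (ballFamily x (2 * r)) u y ^ p ∂μ :=
        lintegral_mono_set (ball_subset_ball (by linarith))
    _ ≤ ENNReal.ofReal c * ∫⁻ y in ball x (2 * r), g y ^ p ∂μ :=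
        hmax x (2 * r) (by positivity) u hu g hg

theorem SupportsMaximalPoincare.ballOsc_le (hmax : SupportsMaximalPoincare ν μ q p c)
    (hp : 0 < p) (hc : 0 ≤ c) (hμ : FinitePosOnBalls μ) {cμ : ℝ} (hμd : IsDoubling μ cμ)
    (hcμ : 0 < cμ) {x : X} {r : ℝ} (hr : 0 < r) {u : X → ℝ}
    (hu : ∃ L : ℝ≥0, LipschitzWith L u) {g : X → ℝ≥0∞} (hg : IsWeakUpperGradient μ p u g) :
    ballOsc ν q u x r ≤ ENNReal.ofReal ((c * cμ) ^ (1 / p)) *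
      ((μ (ball x (2 * r)))⁻¹ * ∫⁻ y in ball x (2 * r), g y ^ p ∂μ) ^ (1 / p) := by
  set I := ∫⁻ y in ball x (2 * r), g y ^ p ∂μ
  obtain ⟨hμ₀, hμ_top⟩ := hμ x r hr
  have hosc : ballOsc ν q u x r ^ p ≤ ENNReal.ofReal (c * cμ) * ((μ (ball x (2 * r)))⁻¹ * I) :=
    calc ballOsc ν q u x r ^ p
        ≤ ENNReal.ofReal c * I / μ (ball x r) :=
          (ENNReal.le_div_iff_mul_le (.inl hμ₀.ne') (.inl hμ_top.ne)).mpr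
            (hmax.ballOsc_rpow_mul_measure_le hp.le hr hu hg)
      _ ≤ ENNReal.ofReal c * I * (ENNReal.ofReal cμ * (μ (ball x (2 * r)))⁻¹) := by
          rw [div_eq_mul_inv]
          gcongr
          exact hμd.inv_measure_ball_le hcμ x hr
      _ = ENNReal.ofReal (c * cμ) * ((μ (ball x (2 * r)))⁻¹ * I) := by
          rw [ENNReal.ofReal_mul hc]
          ring
  calc ballOsc ν q u x r
      = (ballOsc ν q u x r ^ p) ^ (1 / p) := by rw [one_div, ENNReal.rpow_rpow_inv hp.ne']
    _ ≤ (ENNReal.ofReal (c * cμ) * ((μ (ball x (2 * r)))⁻¹ * I)) ^ (1 / p) := by gcongr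
    _ = ENNReal.ofReal ((c * cμ) ^ (1 / p)) * ((μ (ball x (2 * r)))⁻¹ * I) ^ (1 / p) := by
        rw [ENNReal.mul_rpow_of_nonneg _ _ (by positivity),
          ENNReal.ofReal_rpow_of_nonneg (by positivity) (by positivity)]

end MaximalPoincare

theorem stmt12_general {X : Type*} [MetricSpace X] [MeasurableSpace X] [BorelSpace X]
    (ν μ : Measure X) (q p c : ℝ) (hq : 1 < q) (hp : 1 < p) (hc : 0 < c)
    (hνf : FinitePosOnBalls ν) (hμf : FinitePosOnBalls μ)
    (hμd : ∃ cμ > 1, IsDoubling μ cμ)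
    (hmax : ∀ (x₀ : X) (r₀ : ℝ), 0 < r₀ →
      ∀ u : X → ℝ, (∃ L : ℝ≥0, LipschitzWith L u) →
      ∀ g : X → ℝ≥0∞, IsWeakUpperGradient μ p u g →
      ∫⁻ x in Metric.ball x₀ r₀,
          (sharpMax ν q
            {b : X × ℝ | 0 < b.2 ∧ Metric.ball b.1 (2 * b.2) ⊆ Metric.ball x₀ r₀}
            u x) ^ p ∂μ
        ≤ ENNReal.ofReal c * ∫⁻ x in Metric.ball x₀ r₀, g x ^ p ∂μ) :
    ∃ C > 0, ∀ (x : X) (r : ℝ), 0 < r →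
      ∀ u : X → ℝ, (∃ L : ℝ≥0, LipschitzWith L u) →
      ∀ g : X → ℝ≥0∞, IsWeakUpperGradient μ p u g →
      ((ν (Metric.ball x r))⁻¹ *
          ∫⁻ y in Metric.ball x r,
            ENNReal.ofReal |u y - ⨍ z in Metric.ball x r, u z ∂ν| ^ q ∂ν) ^ (1 / q)
        ≤ ENNReal.ofReal (C * Metric.diam (Metric.ball x r)) *
          ((μ (Metric.ball x (2 * r)))⁻¹ *
            ∫⁻ y in Metric.ball x (2 * r), g y ^ p ∂μ) ^ (1 / p) := by
  obtain ⟨cμ, hcμ, hμD⟩ := hμd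
  have hq₀ : 0 < q := zero_lt_one.trans hq
  have hcμ₀ : 0 < cμ := zero_lt_one.trans hcμ
  refine ⟨(c * cμ) ^ (1 / p), by positivity, fun x r hr u hu g hg ↦ ?_⟩
  rcases (diam_nonneg (s := ball x r)).eq_or_lt with hD | hD
  · obtain ⟨hν₀, hν_top⟩ := hνf x r hr
    have hu_const : EqOn u (fun _ ↦ u x) (ball x r) := fun y hy ↦
      congrArg u (subsingleton_ball_of_diam_eq_zero hD.symm hy (mem_ball_self hr))
    rw [lintegral_abs_sub_setAverage_rpow_eq_zero_of_eqOn measurableSet_ball hν₀.ne' hν_top.ne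
      hq₀ hu_const, mul_zero, ENNReal.zero_rpow_of_pos (by positivity)]
    exact zero_le
  · rw [← ofReal_diam_mul_ballOsc ν hq₀ u hD, mul_comm _ (diam _),
      ENNReal.ofReal_mul (by positivity), mul_assoc]
    gcongr
    exact SupportsMaximalPoincare.ballOsc_le hmax (zero_lt_one.trans hp) hc.le hμf hμD hcμ₀ hr hu hg

/-- if `X` supports a maximal `(q,p)`-Poincaré inequality with constant `c`,
then there is `C > 0` such that
`(⨍_B |u - u_{B;ν}|^q dν)^{1/q} ≤ C diam(B) (⨍_{2B} g^p dμ)^{1/p}`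
for every ball `B`, Lipschitz `u`, and `p`-weak upper gradient `g` of `u`. -/
theorem stmt12 {X : Type*} [MetricSpace X] [MeasurableSpace X] [BorelSpace X]
    (ν μ : Measure X) (q p c : ℝ) (hq : 1 < q) (hp : 1 < p) (hc : 0 < c)
    (hνf : FinitePosOnBalls ν) (hμf : FinitePosOnBalls μ)
    (hνd : ∃ cν > 1, IsDoubling ν cν) (hμd : ∃ cμ > 1, IsDoubling μ cμ)
    (hmax : ∀ (x₀ : X) (r₀ : ℝ), 0 < r₀ →
      ∀ u : X → ℝ, (∃ L : ℝ≥0, LipschitzWith L u) →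
      ∀ g : X → ℝ≥0∞, IsWeakUpperGradient μ p u g →
      ∫⁻ x in Metric.ball x₀ r₀,
          (sharpMax ν q
            {b : X × ℝ | 0 < b.2 ∧ Metric.ball b.1 (2 * b.2) ⊆ Metric.ball x₀ r₀}
            u x) ^ p ∂μ
        ≤ ENNReal.ofReal c * ∫⁻ x in Metric.ball x₀ r₀, g x ^ p ∂μ) :
    ∃ C > 0, ∀ (x : X) (r : ℝ), 0 < r →
      ∀ u : X → ℝ, (∃ L : ℝ≥0, LipschitzWith L u) →
      ∀ g : X → ℝ≥0∞, IsWeakUpperGradient μ p u g →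
      ((ν (Metric.ball x r))⁻¹ *
          ∫⁻ y in Metric.ball x r,
            ENNReal.ofReal |u y - ⨍ z in Metric.ball x r, u z ∂ν| ^ q ∂ν) ^ (1 / q)
        ≤ ENNReal.ofReal (C * Metric.diam (Metric.ball x r)) *
          ((μ (Metric.ball x (2 * r)))⁻¹ *
            ∫⁻ y in Metric.ball x (2 * r), g y ^ p ∂μ) ^ (1 / p) :=
  stmt12_general ν μ q p c hq hp hc hνf hμf hμd hmax
end
end

section
/- Let 1 ≤ p < n and let X = (X,d,ν,μ) be ℝⁿ with the Euclidean metric, μ Lebesgue measure, and dν(x) = |x|^{-p} dμ(x). Then X satisfies the p-balance condition: there is C > 0 such that (diam(B')/diam(B))^p ν(B')/ν(B) ≤ C μ(B')/μ(B) for all balls B, B' = B(x',r') with x' ∈ B and 0 < r' ≤ diam(B). -/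
open MeasureTheory Metric Set ENNReal NNReal

noncomputable section

-- diam of a ball in a nontrivial real normed space
lemma diam_ball_eq {E : Type*} [NormedAddCommGroup E] [NormedSpace ℝ E] [Nontrivial E]
    (x : E) {r : ℝ} (hr : 0 < r) : Metric.diam (Metric.ball x r) = 2 * r := by
  refine le_antisymm (diam_ball hr.le) ?_
  obtain ⟨u, hu⟩ := exists_norm_eq E (zero_le_one)
  refine le_of_forall_lt fun c hc => ?_
  rcases lt_or_ge c 0 with h0 | h0
  · exact h0.trans_le Metric.diam_nonneg
  · set t : ℝ := (c / 2 + r) / 2 with ht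
    have htlt : t < r := by
      have : c / 2 < r := by linarith
      linarith
    have htpos : 0 ≤ t := by positivity
    have hmem1 : x + t • u ∈ Metric.ball x r := by
      simp [Metric.mem_ball, dist_eq_norm, norm_smul, hu, abs_of_nonneg htpos, htlt]
    have hmem2 : x - t • u ∈ Metric.ball x r := by
      simp [Metric.mem_ball, dist_eq_norm, norm_smul, hu, abs_of_nonneg htpos, htlt]
    have hdist : dist (x + t • u) (x - t • u) = 2 * t := by
      rw [dist_eq_norm]
      have : x + t • u - (x - t • u) = (2 * t) • u := by
        rw [two_mul, add_smul]; abel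
      rw [this, norm_smul, hu, mul_one, Real.norm_eq_abs, abs_of_nonneg (by positivity)]
    have := dist_le_diam_of_mem isBounded_ball hmem1 hmem2
    rw [hdist] at this
    calc c < 2 * t := by rw [ht]; linarith
    _ ≤ _ := this

variable {n : ℕ} {p : ℝ}

lemma w_meas (n : ℕ) (p : ℝ) :
    Measurable (fun x : EuclideanSpace ℝ (Fin n) => ENNReal.ofReal (‖x‖ ^ (-p))) := by
  fun_prop

lemma nu_upper (hp : 0 ≤ p) {s : Set (EuclideanSpace ℝ (Fin n))} (hs : MeasurableSet s) {d : ℝ}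
    (hd : 0 < d) (h : ∀ y ∈ s, d ≤ ‖y‖) :
    (volume.withDensity fun x : EuclideanSpace ℝ (Fin n) => ENNReal.ofReal (‖x‖ ^ (-p))) s
      ≤ ENNReal.ofReal (d ^ (-p)) * volume s := by
  rw [withDensity_apply _ hs, ← setLIntegral_const]
  refine setLIntegral_mono measurable_const fun y hy => ?_
  exact ENNReal.ofReal_le_ofReal
    (Real.rpow_le_rpow_of_nonpos hd (h y hy) (neg_nonpos.mpr hp))

lemma nu_lower (hn : 0 < n) (hp : 0 < p) {s : Set (EuclideanSpace ℝ (Fin n))} (hs : MeasurableSet s) {d : ℝ}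
    (hd : 0 < d) (h : ∀ y ∈ s, ‖y‖ ≤ d) :
    ENNReal.ofReal (d ^ (-p)) * volume s
      ≤ (volume.withDensity fun x : EuclideanSpace ℝ (Fin n) => ENNReal.ofReal (‖x‖ ^ (-p))) s := by
  rw [withDensity_apply _ hs, ← setLIntegral_const]
  refine setLIntegral_mono_ae ((w_meas n p).aemeasurable) ?_
  haveI : Nontrivial (EuclideanSpace ℝ (Fin n)) :=
    Module.nontrivial_of_finrank_pos (R := ℝ) (by simp [finrank_euclideanSpace_fin, hn])
  have h0 : ∀ᵐ y : EuclideanSpace ℝ (Fin n) ∂volume, y ≠ 0 := by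
    rw [ae_iff]
    simpa using measure_singleton (0 : EuclideanSpace ℝ (Fin n))
  filter_upwards [h0] with y hy0 hys
  refine ENNReal.ofReal_le_ofReal ?_
  have hny : 0 < ‖y‖ := norm_pos_iff.mpr hy0
  exact Real.rpow_le_rpow_of_nonpos hny (h y hys) (neg_nonpos.mpr hp.le)

def Kc (n : ℕ) (p : ℝ) : ℝ :=
  2 ^ n * (1 - (2⁻¹ : ℝ) ^ ((n : ℝ) - p))⁻¹
    * (volume (ball (0 : EuclideanSpace ℝ (Fin n)) 1)).toReal

lemma euclid_nontrivial (hn : 0 < n) : Nontrivial (EuclideanSpace ℝ (Fin n)) :=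
  Module.nontrivial_of_finrank_pos (R := ℝ) (by simp [finrank_euclideanSpace_fin, hn])

lemma vol_ball (hn : 0 < n) (x : EuclideanSpace ℝ (Fin n)) {r : ℝ} (hr : 0 ≤ r) :
    volume (ball x r)
      = ENNReal.ofReal (r ^ n) * volume (ball (0 : EuclideanSpace ℝ (Fin n)) 1) := by
  haveI := euclid_nontrivial hn
  rw [Measure.addHaar_ball volume x hr, finrank_euclideanSpace_fin]

lemma real_term (hp : 0 < p) (hnp : 0 < (n : ℝ) - p) {r : ℝ} (hr : 0 < r) (k : ℕ) :
    (r * 2⁻¹ ^ (k + 1)) ^ (-p) * (r * 2⁻¹ ^ k) ^ n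
      ≤ 2 ^ n * r ^ ((n : ℝ) - p) * ((2⁻¹ : ℝ) ^ ((n : ℝ) - p)) ^ k := by
  set a : ℝ := (2⁻¹ : ℝ) ^ ((n : ℝ) - p) with ha
  have ha0 : 0 < a := Real.rpow_pos_of_pos (by norm_num) _
  have ha1 : a ≤ 1 := (Real.rpow_le_one (by norm_num) (by norm_num) hnp.le)
  set d : ℝ := r * 2⁻¹ ^ (k + 1) with hd'
  have hd : 0 < d := by positivity
  have h2d : r * 2⁻¹ ^ k = 2 * d := by
    rw [hd', pow_succ]; ring
  have key : d ^ (-p) * d ^ n = r ^ ((n : ℝ) - p) * a ^ (k + 1) := by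
    have e1 : (d : ℝ) ^ n = d ^ ((n : ℕ) : ℝ) := (Real.rpow_natCast d n).symm
    rw [e1, ← Real.rpow_add hd]
    have e2 : -p + (n : ℝ) = (n : ℝ) - p := by ring
    rw [e2, hd', Real.mul_rpow hr.le (by positivity)]
    congr 1
    rw [← Real.rpow_natCast (2⁻¹ : ℝ) (k + 1), ← Real.rpow_mul (by norm_num), mul_comm,
      Real.rpow_mul (by norm_num), Real.rpow_natCast]
  rw [h2d]
  calc d ^ (-p) * (2 * d) ^ n = 2 ^ n * (d ^ (-p) * d ^ n) := by rw [mul_pow]; ring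
    _ = 2 ^ n * (r ^ ((n : ℝ) - p) * a ^ (k + 1)) := by rw [key]
    _ ≤ 2 ^ n * (r ^ ((n : ℝ) - p) * a ^ k) := by
        have hrp : (0:ℝ) ≤ r ^ ((n : ℝ) - p) := (Real.rpow_pos_of_pos hr _).le
        have hpow := pow_le_pow_of_le_one ha0.le ha1 (Nat.le_succ k)
        exact mul_le_mul_of_nonneg_left (mul_le_mul_of_nonneg_left hpow hrp) (by positivity)
    _ = 2 ^ n * r ^ ((n : ℝ) - p) * a ^ k := by ring

lemma nu_ball_zero_le (hn : 0 < n) (hp : 0 < p) (hpn : p < n) {r : ℝ} (hr : 0 < r) :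
    (volume.withDensity fun x : EuclideanSpace ℝ (Fin n) => ENNReal.ofReal (‖x‖ ^ (-p)))
        (ball 0 r) ≤ ENNReal.ofReal (Kc n p * r ^ ((n : ℝ) - p)) := by
  haveI := euclid_nontrivial hn
  set ν := volume.withDensity
      fun x : EuclideanSpace ℝ (Fin n) => ENNReal.ofReal (‖x‖ ^ (-p)) with hνdef
  set μ1 := volume (ball (0 : EuclideanSpace ℝ (Fin n)) 1) with hμ1
  have hμ1fin : μ1 ≠ ⊤ := measure_ball_lt_top.ne
  set a : ℝ := (2⁻¹ : ℝ) ^ ((n : ℝ) - p) with ha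
  have hnp : 0 < (n : ℝ) - p := by linarith
  have ha0 : 0 < a := Real.rpow_pos_of_pos (by norm_num) _
  have ha1 : a < 1 := Real.rpow_lt_one (by norm_num) (by norm_num) hnp
  set A : ℕ → Set (EuclideanSpace ℝ (Fin n)) :=
    fun k => ball 0 (r * 2⁻¹ ^ k) \ ball 0 (r * 2⁻¹ ^ (k + 1)) with hA
  -- the annuli cover the punctured ball
  have hcover : ball (0 : EuclideanSpace ℝ (Fin n)) r \ {0} ⊆ ⋃ k, A k := by
    rintro y ⟨hy, hy0⟩
    have hy0' : 0 < ‖y‖ := norm_pos_iff.mpr hy0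
    have hyr : ‖y‖ < r := by simpa [mem_ball_zero_iff] using hy
    have hex : ∃ k : ℕ, r * 2⁻¹ ^ (k + 1) ≤ ‖y‖ := by
      obtain ⟨k, hk⟩ := exists_pow_lt_of_lt_one (div_pos hy0' hr) (by norm_num : (2⁻¹ : ℝ) < 1)
      refine ⟨k, ?_⟩
      have h1 : (2⁻¹ : ℝ) ^ (k + 1) ≤ 2⁻¹ ^ k :=
        pow_le_pow_of_le_one (by norm_num) (by norm_num) (Nat.le_succ k)
      have h2 : r * 2⁻¹ ^ k < ‖y‖ := by
        have := (lt_div_iff₀ hr).mp hk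
        linarith
      nlinarith [hr.le]
    refine mem_iUnion.2 ⟨Nat.find hex, ?_, ?_⟩
    · rw [mem_ball_zero_iff]
      rcases Nat.eq_zero_or_pos (Nat.find hex) with h0 | h0
      · simp only [h0, pow_zero, mul_one]
        exact hyr
      · have hmin := Nat.find_min hex (Nat.sub_lt h0 one_pos)
        push_neg at hmin
        calc ‖y‖ < r * 2⁻¹ ^ (Nat.find hex - 1 + 1) := hmin
          _ = r * 2⁻¹ ^ Nat.find hex := by rw [Nat.sub_add_cancel h0]
    · rw [mem_ball_zero_iff]
      push_neg
      exact Nat.find_spec hex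
  have hν0 : ν ({0} : Set (EuclideanSpace ℝ (Fin n))) = 0 :=
    (withDensity_absolutelyContinuous volume _) (measure_singleton 0)
  have hterm : ∀ k : ℕ, ν (A k)
      ≤ ENNReal.ofReal (2 ^ n * r ^ ((n : ℝ) - p) * a ^ k) * μ1 := by
    intro k
    have hd : (0 : ℝ) < r * 2⁻¹ ^ (k + 1) := by positivity
    have h2 : ν (A k) ≤ ENNReal.ofReal ((r * 2⁻¹ ^ (k + 1)) ^ (-p)) * volume (A k) := by
      apply nu_upper hp.le (measurableSet_ball.diff measurableSet_ball) hd
      intro y hy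
      have := hy.2
      rw [mem_ball_zero_iff, not_lt] at this
      exact this
    have h3 : volume (A k) ≤ ENNReal.ofReal ((r * 2⁻¹ ^ k) ^ n) * μ1 := by
      calc volume (A k) ≤ volume (ball (0 : EuclideanSpace ℝ (Fin n)) (r * 2⁻¹ ^ k)) :=
            measure_mono diff_subset
        _ = _ := vol_ball hn _ (by positivity)
    calc ν (A k) ≤ ENNReal.ofReal ((r * 2⁻¹ ^ (k + 1)) ^ (-p))
          * (ENNReal.ofReal ((r * 2⁻¹ ^ k) ^ n) * μ1) :=
          h2.trans (mul_le_mul_right h3 _)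
      _ = ENNReal.ofReal ((r * 2⁻¹ ^ (k + 1)) ^ (-p) * (r * 2⁻¹ ^ k) ^ n) * μ1 := by
          rw [← mul_assoc, ← ENNReal.ofReal_mul (Real.rpow_nonneg hd.le _)]
      _ ≤ ENNReal.ofReal (2 ^ n * r ^ ((n : ℝ) - p) * a ^ k) * μ1 := by
          exact mul_le_mul_left (ENNReal.ofReal_le_ofReal (real_term hp hnp hr k)) _
  have hsum : ν (ball 0 r) ≤ ∑' k, ν (A k) := by
    calc ν (ball (0 : EuclideanSpace ℝ (Fin n)) r) = ν (ball 0 r \ {0}) :=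
          (measure_diff_null hν0).symm
      _ ≤ ν (⋃ k, A k) := measure_mono hcover
      _ ≤ ∑' k, ν (A k) := measure_iUnion_le A
  have hgeom : ∑' k : ℕ, ENNReal.ofReal (2 ^ n * r ^ ((n : ℝ) - p) * a ^ k) * μ1
      ≤ ENNReal.ofReal (Kc n p * r ^ ((n : ℝ) - p)) := by
    have e1 : ∀ k : ℕ, ENNReal.ofReal (2 ^ n * r ^ ((n : ℝ) - p) * a ^ k) * μ1
        = ENNReal.ofReal (2 ^ n * r ^ ((n : ℝ) - p)) * μ1 * (ENNReal.ofReal a) ^ k := by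
      intro k
      rw [ENNReal.ofReal_mul (by positivity), ENNReal.ofReal_pow ha0.le]
      ring
    rw [tsum_congr e1, ENNReal.tsum_mul_left, ENNReal.tsum_geometric]
    have hsub : (1 : ℝ≥0∞) - ENNReal.ofReal a = ENNReal.ofReal (1 - a) := by
      rw [ENNReal.ofReal_sub _ ha0.le, ENNReal.ofReal_one]
    rw [hsub, ← ENNReal.ofReal_inv_of_pos (by linarith)]
    rw [← ENNReal.ofReal_toReal hμ1fin, ← ENNReal.ofReal_mul (by positivity),
      ← ENNReal.ofReal_mul (by positivity)]
    apply ENNReal.ofReal_le_ofReal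
    rw [Kc]
    rw [← hμ1, ← ha]
    have : (0:ℝ) ≤ μ1.toReal := ENNReal.toReal_nonneg
    nlinarith [Real.rpow_pos_of_pos hr ((n:ℝ) - p), inv_nonneg.mpr (by linarith : (0:ℝ) ≤ 1 - a)]
  exact hsum.trans ((ENNReal.tsum_le_tsum hterm).trans hgeom)

lemma norm_le_of_mem_ball {x y : EuclideanSpace ℝ (Fin n)} {r : ℝ}
    (hy : y ∈ ball x r) : ‖y‖ ≤ ‖x‖ + r := by
  have : ‖y - x‖ < r := by rwa [mem_ball, dist_eq_norm] at hy
  have := norm_sub_norm_le y x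
  linarith

lemma nu_ball_lt_top (hn : 0 < n) (hp : 0 < p) (hpn : p < n)
    (x : EuclideanSpace ℝ (Fin n)) {r : ℝ} (hr : 0 < r) :
    (volume.withDensity fun x : EuclideanSpace ℝ (Fin n) => ENNReal.ofReal (‖x‖ ^ (-p)))
        (ball x r) < ⊤ := by
  have hR : (0:ℝ) < ‖x‖ + r + 1 := by positivity
  have hsub : ball x r ⊆ ball (0 : EuclideanSpace ℝ (Fin n)) (‖x‖ + r + 1) := by
    intro y hy
    rw [mem_ball_zero_iff]
    exact lt_of_le_of_lt (norm_le_of_mem_ball hy) (by linarith)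
  calc (volume.withDensity fun x : EuclideanSpace ℝ (Fin n) => ENNReal.ofReal (‖x‖ ^ (-p)))
        (ball x r)
      ≤ _ := measure_mono hsub
    _ ≤ ENNReal.ofReal (Kc n p * (‖x‖ + r + 1) ^ ((n : ℝ) - p)) :=
        nu_ball_zero_le hn hp hpn hR
    _ < ⊤ := ENNReal.ofReal_lt_top

lemma nu_ball_pos (hn : 0 < n) (hp : 0 < p)
    (x : EuclideanSpace ℝ (Fin n)) {r : ℝ} (hr : 0 < r) :
    0 < (volume.withDensity fun x : EuclideanSpace ℝ (Fin n) => ENNReal.ofReal (‖x‖ ^ (-p)))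
        (ball x r) := by
  haveI := euclid_nontrivial hn
  have hd : (0:ℝ) < ‖x‖ + r := by positivity
  have hlow := nu_lower hn hp measurableSet_ball hd
    (fun y hy => norm_le_of_mem_ball hy)
  refine lt_of_lt_of_le ?_ hlow
  exact ENNReal.mul_pos (by simp [Real.rpow_pos_of_pos hd]) (measure_ball_pos _ _ hr).ne'

lemma rpow_helper {r : ℝ} (hr : 0 < r) :
    r ^ (-p) * r ^ n = r ^ ((n : ℝ) - p) := by
  have e1 : (r : ℝ) ^ n = r ^ ((n : ℕ) : ℝ) := (Real.rpow_natCast r n).symm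
  rw [e1, ← Real.rpow_add hr]
  norm_num [sub_eq_neg_add]

lemma Kc_nonneg (hnp : 0 < (n : ℝ) - p) : 0 ≤ Kc n p := by
  have ha1 : (2⁻¹ : ℝ) ^ ((n : ℝ) - p) ≤ 1 :=
    Real.rpow_le_one (by norm_num) (by norm_num) hnp.le
  have : (0:ℝ) ≤ (1 - (2⁻¹ : ℝ) ^ ((n : ℝ) - p))⁻¹ := inv_nonneg.mpr (by linarith)
  unfold Kc
  positivity

lemma nu_offcenter_le (hn : 0 < n) (hp : 0 < p) (hpn : p < n)
    (z : EuclideanSpace ℝ (Fin n)) {r : ℝ} (hr : 0 < r) :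
    (volume.withDensity fun x : EuclideanSpace ℝ (Fin n) => ENNReal.ofReal (‖x‖ ^ (-p)))
        (ball z r)
      ≤ ENNReal.ofReal ((Kc n p + (volume (ball (0 : EuclideanSpace ℝ (Fin n)) 1)).toReal)
          * r ^ ((n : ℝ) - p)) := by
  haveI := euclid_nontrivial hn
  set ν := volume.withDensity
      fun x : EuclideanSpace ℝ (Fin n) => ENNReal.ofReal (‖x‖ ^ (-p)) with hνdef
  set μ1 := volume (ball (0 : EuclideanSpace ℝ (Fin n)) 1) with hμ1
  have hμ1fin : μ1 ≠ ⊤ := measure_ball_lt_top.ne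
  have hsplit : ν (ball z r)
      = ν (ball z r ∩ ball (0 : EuclideanSpace ℝ (Fin n)) r)
        + ν (ball z r \ ball (0 : EuclideanSpace ℝ (Fin n)) r) :=
    (measure_inter_add_diff _ measurableSet_ball).symm
  have h1 : ν (ball z r ∩ ball (0 : EuclideanSpace ℝ (Fin n)) r)
      ≤ ENNReal.ofReal (Kc n p * r ^ ((n : ℝ) - p)) :=
    (measure_mono inter_subset_right).trans (nu_ball_zero_le hn hp hpn hr)
  have h2 : ν (ball z r \ ball (0 : EuclideanSpace ℝ (Fin n)) r)
      ≤ ENNReal.ofReal (μ1.toReal * r ^ ((n : ℝ) - p)) := by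
    have hup : ν (ball z r \ ball (0 : EuclideanSpace ℝ (Fin n)) r)
        ≤ ENNReal.ofReal (r ^ (-p))
          * volume (ball z r \ ball (0 : EuclideanSpace ℝ (Fin n)) r) := by
      apply nu_upper hp.le (measurableSet_ball.diff measurableSet_ball) hr
      intro y hy
      have := hy.2
      rwa [mem_ball_zero_iff, not_lt] at this
    calc ν (ball z r \ ball (0 : EuclideanSpace ℝ (Fin n)) r)
        ≤ ENNReal.ofReal (r ^ (-p)) * volume (ball z r) :=
          hup.trans (mul_le_mul_right (measure_mono diff_subset) _)
      _ = ENNReal.ofReal (r ^ (-p)) * (ENNReal.ofReal (r ^ n) * μ1) := by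
          rw [vol_ball hn z hr.le]
      _ = ENNReal.ofReal (r ^ (-p) * r ^ n * μ1.toReal) := by
          rw [← mul_assoc, ← ENNReal.ofReal_mul (Real.rpow_nonneg hr.le _),
            ← ENNReal.ofReal_toReal hμ1fin,
            ← ENNReal.ofReal_mul (by positivity), ENNReal.ofReal_toReal hμ1fin]
      _ = ENNReal.ofReal (μ1.toReal * r ^ ((n : ℝ) - p)) := by
          rw [rpow_helper hr]; ring_nf
  calc ν (ball z r) = _ := hsplit
    _ ≤ ENNReal.ofReal (Kc n p * r ^ ((n : ℝ) - p))
        + ENNReal.ofReal (μ1.toReal * r ^ ((n : ℝ) - p)) := add_le_add h1 h2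
    _ = ENNReal.ofReal ((Kc n p + μ1.toReal) * r ^ ((n : ℝ) - p)) := by
        have hKc : 0 ≤ Kc n p := Kc_nonneg (by linarith)
        rw [← ENNReal.ofReal_add (mul_nonneg hKc (Real.rpow_nonneg hr.le _)) (by positivity)]
        ring_nf

/-- in `ℝⁿ` with `1 ≤ p < n`, `μ` Lebesgue measure and
`dν = |x|^{-p} dμ`, the pair `(ν,μ)` satisfies the `p`-balance condition. -/
theorem stmt15 (n : ℕ) (p : ℝ) (hp : 1 ≤ p) (hpn : p < n) :
    ∃ C : ℝ, 0 < C ∧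
      PBalance
        ((volume : Measure (EuclideanSpace ℝ (Fin n))).withDensity
          fun x => ENNReal.ofReal (‖x‖ ^ (-p)))
        (volume : Measure (EuclideanSpace ℝ (Fin n)))
        p C := by
  have hp0 : 0 < p := lt_of_lt_of_le one_pos hp
  have hn0 : 0 < n := by
    have : (0:ℝ) < n := lt_of_lt_of_le (lt_of_lt_of_le one_pos hp) hpn.le
    exact_mod_cast this
  haveI := euclid_nontrivial hn0
  have hnp : 0 < (n : ℝ) - p := by linarith
  set μ1t := (volume (ball (0 : EuclideanSpace ℝ (Fin n)) 1)).toReal with hμ1t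
  have hμ1fin : volume (ball (0 : EuclideanSpace ℝ (Fin n)) 1) ≠ ⊤ := measure_ball_lt_top.ne
  have hμ1pos : 0 < μ1t :=
    ENNReal.toReal_pos (measure_ball_pos _ _ one_pos).ne' hμ1fin
  set K' : ℝ := Kc n p + μ1t with hK'def
  have hK'pos : 0 < K' := add_pos_of_nonneg_of_pos (Kc_nonneg hnp) hμ1pos
  have h9p : (0:ℝ) < (9:ℝ) ^ p := Real.rpow_pos_of_pos (by norm_num) _
  have h4p : (0:ℝ) < (4:ℝ) ^ p := Real.rpow_pos_of_pos (by norm_num) _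
  set C : ℝ := (4:ℝ) ^ p + (9:ℝ) ^ p * K' / μ1t with hCdef
  have hCpos : 0 < C := by positivity
  have hC4 : (4:ℝ) ^ p ≤ C := by
    have h0 : 0 ≤ (9:ℝ) ^ p * K' / μ1t := by positivity
    rw [hCdef]
    linarith
  refine ⟨C, hCpos, ?_⟩
  intro x R x' r' hR hx' hr' hr'le
  rw [diam_ball_eq x hR] at hr'le
  rw [diam_ball_eq x hR, diam_ball_eq x' hr']
  have hr2R : r' ≤ 2 * R := hr'le
  -- measure values
  have hmB' : (volume (ball x' r')).toReal = r' ^ n * μ1t := by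
    rw [vol_ball hn0 x' hr'.le, ENNReal.toReal_mul, ENNReal.toReal_ofReal (by positivity)]
  have hmB : (volume (ball x R)).toReal = R ^ n * μ1t := by
    rw [vol_ball hn0 x hR.le, ENNReal.toReal_mul, ENNReal.toReal_ofReal (by positivity)]
  have hmB'pos : 0 < (volume (ball x' r')).toReal := by rw [hmB']; positivity
  have hmBpos : 0 < (volume (ball x R)).toReal := by rw [hmB]; positivity
  set ν := (volume : Measure (EuclideanSpace ℝ (Fin n))).withDensity
      fun x => ENNReal.ofReal (‖x‖ ^ (-p)) with hνdef
  have hνB'fin : ν (ball x' r') ≠ ⊤ := (nu_ball_lt_top hn0 hp0 hpn x' hr').ne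
  have hνBfin : ν (ball x R) ≠ ⊤ := (nu_ball_lt_top hn0 hp0 hpn x hR).ne
  have hνB'pos : 0 < (ν (ball x' r')).toReal :=
    ENNReal.toReal_pos (nu_ball_pos hn0 hp0 x' hr').ne' hνB'fin
  have hνBpos : 0 < (ν (ball x R)).toReal :=
    ENNReal.toReal_pos (nu_ball_pos hn0 hp0 x hR).ne' hνBfin
  -- simplify the diam quotient
  have hquot : 2 * r' / (2 * R) = r' / R := mul_div_mul_left r' R two_ne_zero
  rw [hquot]
  -- reduce to a product inequality
  rw [← mul_div_assoc, ← mul_div_assoc,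
    div_le_div_iff₀ hνBpos hmBpos]
  -- goal : (r'/R)^p * (ν B').toReal * (μ B).toReal ≤ C * (μ B').toReal * (ν B).toReal
  set vB' := (ν (ball x' r')).toReal
  set vB := (ν (ball x R)).toReal
  set mB' := (volume (ball x' r')).toReal
  set mB := (volume (ball x R)).toReal
  have hrRp : (0:ℝ) < (r' / R) ^ p := Real.rpow_pos_of_pos (by positivity) _
  rcases le_or_gt ‖x‖ (8 * R) with h8 | h8
  -- CASE 1 : the ball is close to the origin
  · -- lower bound for ν B
    have h9R : (0:ℝ) < 9 * R := by linarith
    have hlow : (9 * R) ^ (-p) * mB ≤ vB := by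
      have h : ENNReal.ofReal ((9 * R) ^ (-p)) * volume (ball x R) ≤ ν (ball x R) :=
        nu_lower hn0 hp0 measurableSet_ball h9R
          (fun y hy => (norm_le_of_mem_ball hy).trans (by linarith))
      have h' := ENNReal.toReal_mono hνBfin h
      rwa [ENNReal.toReal_mul, ENNReal.toReal_ofReal (Real.rpow_nonneg h9R.le _)] at h'
    -- upper bound for ν B'
    have hup : vB' ≤ K' * r' ^ ((n:ℝ) - p) := by
      refine ENNReal.toReal_le_of_le_ofReal (by positivity) ?_
      exact nu_offcenter_le hn0 hp0 hpn x' hr'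
    -- scalar inequality
    have hscalar : (r' / R) ^ p * (K' * r' ^ ((n:ℝ) - p)) * mB
        ≤ C * mB' * ((9 * R) ^ (-p) * mB) := by
      rw [hmB', hmB]
      have er : r' ^ p * r' ^ ((n:ℝ) - p) = (r' : ℝ) ^ (n:ℕ) := by
        rw [← Real.rpow_add hr', ← Real.rpow_natCast r' n]
        congr 1
        ring
      have e1 : (r' / R) ^ p * (K' * r' ^ ((n:ℝ) - p)) = K' * r' ^ (n:ℕ) / R ^ p := by
        rw [Real.div_rpow hr'.le hR.le, ← er]
        ring
      have e2 : ((9:ℝ) * R) ^ (-p) = ((9:ℝ) ^ p)⁻¹ / R ^ p := by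
        rw [Real.mul_rpow (by norm_num) hR.le, Real.rpow_neg (by norm_num : (0:ℝ) ≤ 9),
          Real.rpow_neg hR.le, div_eq_mul_inv]
      rw [e1, e2]
      have hRp : (0:ℝ) < R ^ p := Real.rpow_pos_of_pos hR _
      have hkey : K' ≤ C * ((9:ℝ) ^ p)⁻¹ * μ1t := by
        have expand : C * ((9:ℝ) ^ p)⁻¹ * μ1t
            = (4:ℝ) ^ p * ((9:ℝ) ^ p)⁻¹ * μ1t + K' := by
          rw [hCdef]
          field_simp
        rw [expand]
        have : 0 ≤ (4:ℝ) ^ p * ((9:ℝ) ^ p)⁻¹ * μ1t := by positivity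
        linarith
      calc K' * r' ^ (n:ℕ) / R ^ p * (R ^ n * μ1t)
          = (K' * μ1t) * (r' ^ (n:ℕ) * R ^ n) / R ^ p := by ring
        _ ≤ (C * ((9:ℝ) ^ p)⁻¹ * μ1t * μ1t) * (r' ^ (n:ℕ) * R ^ n) / R ^ p := by
            gcongr
        _ = C * (r' ^ n * μ1t) * (((9:ℝ) ^ p)⁻¹ / R ^ p * (R ^ n * μ1t)) := by ring
    calc (r' / R) ^ p * vB' * mB ≤ (r' / R) ^ p * (K' * r' ^ ((n:ℝ) - p)) * mB := by
          exact mul_le_mul_of_nonneg_right (mul_le_mul_of_nonneg_left hup hrRp.le) (by positivity)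
      _ ≤ C * mB' * ((9 * R) ^ (-p) * mB) := hscalar
      _ ≤ C * mB' * vB := by
          exact mul_le_mul_of_nonneg_left hlow (by positivity)
  -- CASE 2 : the ball is far from the origin
  · set d' : ℝ := ‖x‖ - 3 * R with hd'def
    have hd' : 0 < d' := by rw [hd'def]; linarith
    set D : ℝ := ‖x‖ + R with hDdef
    have hD : 0 < D := by rw [hDdef]; positivity
    have hB'norm : ∀ y ∈ ball x' r', d' ≤ ‖y‖ := by
      intro y hy
      have h1 : dist y x < 3 * R := by
        have := dist_triangle y x' x
        have h2 : dist y x' < r' := mem_ball.mp hy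
        have h3 : dist x' x < R := mem_ball.mp hx'
        linarith
      have h4 : ‖x‖ - ‖y‖ ≤ dist y x := by
        rw [dist_comm, dist_eq_norm]
        exact (norm_sub_norm_le x y)
      rw [hd'def]; linarith
    have hup : vB' ≤ d' ^ (-p) * mB' := by
      have h := nu_upper (p := p) hp0.le measurableSet_ball hd' hB'norm
      have h' := ENNReal.toReal_mono
        (ENNReal.mul_ne_top ENNReal.ofReal_ne_top measure_ball_lt_top.ne) h
      rwa [ENNReal.toReal_mul, ENNReal.toReal_ofReal (Real.rpow_nonneg hd'.le _)] at h'
    have hlow : D ^ (-p) * mB ≤ vB := by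
      have h := nu_lower hn0 hp0 measurableSet_ball hD (fun y hy => norm_le_of_mem_ball hy)
      have h' := ENNReal.toReal_mono hνBfin h
      rwa [ENNReal.toReal_mul, ENNReal.toReal_ofReal (Real.rpow_nonneg hD.le _)] at h'
    have hkeyscalar : (r' / R) ^ p * d' ^ (-p) ≤ C * D ^ (-p) := by
      have hDp : (0:ℝ) < D ^ (-p) := Real.rpow_pos_of_pos hD _
      have e1 : (r' / R) ^ p * d' ^ (-p) = (r' / (R * d')) ^ p := by
        rw [← div_div, Real.div_rpow (by positivity : (0:ℝ) ≤ r' / R) hd'.le,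
          Real.rpow_neg hd'.le]
        ring
      have e2 : (4:ℝ) ^ p * D ^ (-p) = (4 / D) ^ p := by
        rw [Real.div_rpow (by norm_num) hD.le, Real.rpow_neg hD.le, div_eq_mul_inv]
      have hbase : r' / (R * d') ≤ 4 / D := by
        rw [div_le_div_iff₀ (by positivity) hD]
        have hD2d' : D ≤ 2 * d' := by rw [hDdef, hd'def]; linarith
        nlinarith
      calc (r' / R) ^ p * d' ^ (-p) = (r' / (R * d')) ^ p := e1
        _ ≤ (4 / D) ^ p := Real.rpow_le_rpow (by positivity) hbase hp0.le
        _ = (4:ℝ) ^ p * D ^ (-p) := e2.symm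
        _ ≤ C * D ^ (-p) := mul_le_mul_of_nonneg_right hC4 hDp.le
    have hmul := mul_le_mul_of_nonneg_right hkeyscalar
      (show (0:ℝ) ≤ mB' * mB by positivity)
    calc (r' / R) ^ p * vB' * mB
        ≤ (r' / R) ^ p * (d' ^ (-p) * mB') * mB := by
          exact mul_le_mul_of_nonneg_right (mul_le_mul_of_nonneg_left hup hrRp.le) (by positivity)
      _ = (r' / R) ^ p * d' ^ (-p) * (mB' * mB) := by ring
      _ ≤ C * D ^ (-p) * (mB' * mB) := hmul
      _ = C * mB' * (D ^ (-p) * mB) := by ring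
      _ ≤ C * mB' * vB := mul_le_mul_of_nonneg_left hlow (by positivity)
end
end
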